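/- arXiv:math/0002091 — 5 statements merged into one kernel-verified Lean document; each statement's English description precedes it below -/
import Mathlib

section
/- Let S be an abelian semigroup containing an identity element 0 (i.e., a commutative monoid), and let A be a finite nonempty subset of S. Then there exists a polynomial p(z) with rational coefficients such that the cardinality |hA| of the h-fold sumset equals p(h) for all sufficiently large integers h. -/
set_option linter.unusedSectionVars false
set_option linter.unusedVariables false
set_option maxHeartbeats 1000000

open Pointwise Finset Polynomial
open scoped Classical

namespace KhovanskiiAux


noncomputable instance lexLO (k : ℕ) : LinearOrder (Lex (Fin k → ℕ)) :=
  letI h1 : LinearOrder (Fin k) := inferInstance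
  letI h2 : WellFoundedLT (Fin k) := inferInstance
  @Pi.Lex.linearOrder (Fin k) (fun _ => ℕ) h1 h2 (fun _ => inferInstance)

variable {k : ℕ}

lemma lex_add {y x : Fin k → ℕ} (v : Fin k → ℕ) (h : toLex y < toLex x) :
    toLex (y + v) < toLex (x + v) := by
  obtain ⟨i, h1, h2⟩ := h
  exact ⟨i, fun j hj => by simpa using congrArg (· + v j) (h1 j hj), by
    simpa using Nat.add_lt_add_right h2 (v i)⟩

lemma lex_trichot {y x : Fin k → ℕ} (h : y ≠ x) : toLex y < toLex x ∨ toLex x < toLex y :=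
  lt_or_gt_of_ne (fun hc : toLex y = toLex x => h (toLex.injective hc))

variable {S : Type*} [AddCommMonoid S] [DecidableEq S] (a : Fin k → S)

def phi (x : Fin k → ℕ) : S := ∑ i, x i • a i

lemma phi_add (x y : Fin k → ℕ) : phi a (x + y) = phi a x + phi a y := by
  simp [phi, add_smul, Finset.sum_add_distrib]

/-- `x` is the lex-least representation among tuples with the same weight and value. -/
def IsGood (x : Fin k → ℕ) : Prop :=
  ∀ y, (∑ i, y i) = (∑ i, x i) → phi a y = phi a x → ¬ toLex y < toLex x

lemma not_isGood_add {x : Fin k → ℕ} (v : Fin k → ℕ) (h : ¬ IsGood a x) :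
    ¬ IsGood a (x + v) := by
  simp only [IsGood, not_forall, not_not] at h ⊢
  obtain ⟨y, h1, h2, h3⟩ := h
  exact ⟨y + v, by simp [Finset.sum_add_distrib, h1], by rw [phi_add, phi_add, h2],
    lex_add v h3⟩

open Finset.Nat (antidiagonalTuple mem_antidiagonalTuple)

lemma card_nsmul_eq (A : Finset S) (ha : ∀ s, s ∈ A ↔ ∃ i, a i = s) (n : ℕ)
    (him : n • A = (antidiagonalTuple k n).image (phi a)) :
    (n • A).card = ((antidiagonalTuple k n).filter (IsGood a)).card := by
  have himage : ((antidiagonalTuple k n).filter (IsGood a)).image (phi a) = n • A := by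
    rw [him]
    apply Finset.Subset.antisymm (Finset.image_subset_image (Finset.filter_subset _ _))
    intro s hs
    obtain ⟨x0, hx0, rfl⟩ := Finset.mem_image.1 hs
    set R := (antidiagonalTuple k n).filter (fun y => phi a y = phi a x0) with hR
    have hRne : R.Nonempty := ⟨x0, Finset.mem_filter.2 ⟨hx0, rfl⟩⟩
    obtain ⟨x, hxR, hmin⟩ := R.exists_min_image toLex hRne
    obtain ⟨hx, hphix⟩ := Finset.mem_filter.1 hxR
    refine Finset.mem_image.2 ⟨x, Finset.mem_filter.2 ⟨hx, ?_⟩, hphix⟩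
    intro y hy hphi hlt
    have hyR : y ∈ R := Finset.mem_filter.2
      ⟨mem_antidiagonalTuple.2 (by rw [hy, mem_antidiagonalTuple.1 hx]), by rw [hphi, hphix]⟩
    exact absurd (hmin y hyR) (not_le.2 hlt)
  rw [← himage]
  apply Finset.card_image_of_injOn
  intro x hx y hy hxy
  obtain ⟨hx1, hx2⟩ := Finset.mem_filter.1 hx
  obtain ⟨hy1, hy2⟩ := Finset.mem_filter.1 hy
  by_contra hne
  have hsum : (∑ i, x i) = ∑ i, y i := by
    rw [mem_antidiagonalTuple.1 hx1, mem_antidiagonalTuple.1 hy1]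
  rcases lex_trichot hne with h | h
  · exact hy2 x hsum hxy h
  · exact hx2 y hsum.symm hxy.symm h

lemma exists_basis :
    ∃ B : Finset (Fin k → ℕ), (∀ b ∈ B, ¬ IsGood a b) ∧
      ∀ x, ¬ IsGood a x → ∃ b ∈ B, b ≤ x := by
  set M : Set (Fin k → ℕ) := {x | ¬ IsGood a x ∧ ∀ y, ¬ IsGood a y → y ≤ x → y = x} with hM
  have hanti : IsAntichain (· ≤ ·) M := by
    rintro x ⟨hx1, hx2⟩ y ⟨hy1, hy2⟩ hne hle
    exact hne (hy2 x hx1 hle)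
  have hfin : M.Finite := hanti.finite_of_partiallyWellOrderedOn (Set.isPWO_of_wellQuasiOrderedLE M)
  refine ⟨hfin.toFinset, fun b hb => ((hfin.mem_toFinset.1 hb).1), ?_⟩
  have key : ∀ n (x : Fin k → ℕ), (∑ i, x i) = n → ¬ IsGood a x → ∃ m ∈ M, m ≤ x := by
    intro n
    induction n using Nat.strong_induction_on with
    | _ n ih =>
      intro x hxn hx
      by_cases hmin : ∀ y, ¬ IsGood a y → y ≤ x → y = x
      · exact ⟨x, ⟨hx, hmin⟩, le_refl x⟩
      · push_neg at hmin
        obtain ⟨y, hy1, hy2, hy3⟩ := hmin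
        have hlt : (∑ i, y i) < n := by
          rw [← hxn]
          refine Finset.sum_lt_sum (fun i _ => hy2 i) ?_
          obtain ⟨i, hi⟩ := Function.ne_iff.1 hy3
          exact ⟨i, Finset.mem_univ i, lt_of_le_of_ne (hy2 i) hi⟩
        obtain ⟨m, hm, hle⟩ := ih _ hlt y rfl hy1
        exact ⟨m, hm, le_trans hle hy2⟩
  intro x hx
  obtain ⟨m, hm, hle⟩ := key _ x rfl hx
  exact ⟨m, hfin.mem_toFinset.2 hm, hle⟩


lemma phi_single (j : Fin k) : phi a (Pi.single j 1) = a j := by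
  rw [phi]
  rw [Fintype.sum_eq_single j (fun i hij => by simp [Pi.single_eq_of_ne hij])]
  simp

lemma nsmul_eq_image (A : Finset S) (ha : ∀ s, s ∈ A ↔ ∃ i, a i = s) (n : ℕ) :
    n • A = (antidiagonalTuple k n).image (phi a) := by
  induction n with
  | zero =>
      rw [zero_nsmul, Finset.Nat.antidiagonalTuple_zero_right]
      ext s
      simp [phi, eq_comm]
  | succ n ih =>
      rw [succ_nsmul, ih]
      ext s
      simp only [Finset.mem_add, Finset.mem_image, mem_antidiagonalTuple]
      constructor
      · rintro ⟨t, ⟨x, hx, rfl⟩, b, hb, rfl⟩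
        obtain ⟨j, rfl⟩ := (ha b).1 hb
        exact ⟨x + Pi.single j 1, by simp [Finset.sum_add_distrib, hx], by
          rw [phi_add, phi_single]⟩
      · rintro ⟨x, hx, rfl⟩
        have hex : ∃ j, x j ≠ 0 := by
          by_contra hc
          push_neg at hc
          simp [funext hc] at hx
        obtain ⟨j, hj⟩ := hex
        set y : Fin k → ℕ := Function.update x j (x j - 1) with hy
        have hxy : x = y + Pi.single j 1 := by
          funext i
          by_cases hij : i = j
          · subst hij; simp [hy, Nat.sub_add_cancel (Nat.one_le_iff_ne_zero.2 hj)]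
          · simp [hy, hij, Function.update_of_ne hij, Pi.single_eq_of_ne hij]
        refine ⟨phi a y, ⟨y, ?_, rfl⟩, a j, (ha _).2 ⟨j, rfl⟩, by rw [hxy, phi_add, phi_single]⟩
        have := hx
        rw [hxy] at this
        simp [Finset.sum_add_distrib] at this
        omega




open Finset.Nat (antidiagonalTuple mem_antidiagonalTuple)

variable {k : ℕ}

lemma card_filter_le (c : Fin k → ℕ) (n : ℕ) (h : (∑ i, c i) ≤ n) :
    ((antidiagonalTuple k n).filter (fun x => c ≤ x)).card
      = (antidiagonalTuple k (n - ∑ i, c i)).card := by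
  apply Finset.card_bij' (fun x _ => x - c) (fun y _ => y + c)
  · intro x hx
    obtain ⟨hx1, hx2⟩ := Finset.mem_filter.1 hx
    have hxc : x - c + c = x := funext fun i => Nat.sub_add_cancel (hx2 i)
    rw [mem_antidiagonalTuple]
    have hsum : (∑ i, (x - c) i) + ∑ i, c i = ∑ i, x i := by
      rw [← Finset.sum_add_distrib]
      exact Finset.sum_congr rfl (fun i _ => congrFun hxc i)
    have hn := mem_antidiagonalTuple.1 hx1
    omega
  · intro y hy
    refine Finset.mem_filter.2 ⟨mem_antidiagonalTuple.2 ?_, fun i => Nat.le_add_left _ _⟩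
    simp only [Pi.add_apply]
    rw [Finset.sum_add_distrib, mem_antidiagonalTuple.1 hy]
    omega
  · intro x hx
    exact funext fun i => Nat.sub_add_cancel ((Finset.mem_filter.1 hx).2 i)
  · intro y hy
    exact funext fun i => by simp

/-- The polynomial that counts `antidiagonalTuple k n`. -/
noncomputable def p0 (k : ℕ) : Polynomial ℚ :=
  Polynomial.C (((k-1).factorial : ℚ))⁻¹ * (ascPochhammer ℚ (k-1)).comp (X + 1)

lemma card_adt (hk : k ≠ 0) (r : ℕ) :
    ((antidiagonalTuple k r).card : ℚ) = (p0 k).eval (r : ℚ) := by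
  have h1 : (antidiagonalTuple k r).card = Nat.multichoose k r := by
    rw [← Finset.piAntidiag_univ_fin_eq_antidiagonalTuple r k,
      ← Finset.map_sym_eq_piAntidiag, Finset.card_map, Finset.sym_univ,
      Finset.card_univ, Sym.card_sym_eq_multichoose, Fintype.card_fin]
  have h2 : Nat.multichoose k r = (r + (k-1)).choose (k-1) := by
    rw [Nat.multichoose_eq]
    have hkr : k + r - 1 = r + (k - 1) := by omega
    rw [hkr]
    have := Nat.choose_symm (n := r + (k-1)) (k := r) (by omega)
    rw [← this]
    congr 1
    omega
  obtain ⟨k', rfl⟩ := Nat.exists_eq_add_of_le (Nat.one_le_iff_ne_zero.2 hk)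
  have h5 : 1 + k' - 1 = k' := by omega
  have h3 : (antidiagonalTuple (1 + k') r).card = (r + k').choose k' := by
    rw [h1, h2, h5]
  rw [h3, p0, h5]
  rcases Nat.eq_zero_or_pos k' with rfl | hk'
  · simp [ascPochhammer_zero]
  · rw [Nat.cast_choose_eq_ascPochhammer_div]
    have h4 : r + k' - (k' - 1) = r + 1 := by omega
    rw [h4, eval_mul, eval_C, eval_comp, eval_add, eval_X, eval_one, div_eq_inv_mul]
    push_cast
    ring

lemma inf'_filter (s : Finset (Fin k → ℕ)) (t : Finset (Fin k → ℕ))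
    (ht : t.Nonempty) :
    t.inf' ht (fun b => s.filter (fun x => b ≤ x)) = s.filter (fun x => t.sup id ≤ x) := by
  induction ht using Finset.Nonempty.cons_induction with
  | singleton b => simp
  | cons b t hbt htne ih =>
      rw [Finset.inf'_cons, ih, Finset.sup_cons]
      ext x
      simp only [Finset.inf_eq_inter, Finset.mem_inter, Finset.mem_filter, sup_le_iff, id]
      tauto
      exact htne



lemma main_aux {S : Type*} [AddCommMonoid S] [DecidableEq S]
    {k : ℕ} (hk : k ≠ 0) (a : Fin k → S) (A : Finset S)
    (ha : ∀ s, s ∈ A ↔ ∃ i, a i = s) :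
    ∃ p : Polynomial ℚ, ∃ N : ℕ, ∀ h : ℕ, N < h →
      ((h • A).card : ℚ) = Polynomial.eval (h : ℚ) p := by
  obtain ⟨B, hB1, hB2⟩ := exists_basis a
  set m : Finset (Fin k → ℕ) → ℕ := fun t => ∑ i, (t.sup id) i with hm
  set N : ℕ := ∑ b ∈ B, ∑ i, b i with hN
  have hmN : ∀ t ⊆ B, m t ≤ N := by
    intro t ht
    have hsup : ∀ i, (t.sup id) i ≤ ∑ b ∈ B, b i := by
      intro i
      have : t.sup id ≤ fun i => ∑ b ∈ B, b i := by
        apply Finset.sup_le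
        intro b hb i
        exact Finset.single_le_sum (f := fun b : Fin k → ℕ => b i)
          (fun _ _ => Nat.zero_le _) (ht hb)
      exact this i
    calc m t ≤ ∑ i, ∑ b ∈ B, b i := Finset.sum_le_sum (fun i _ => hsup i)
      _ = N := by rw [hN, Finset.sum_comm]
  set F := B.powerset.filter (·.Nonempty) with hF
  refine ⟨p0 k - ∑ t ∈ F, C ((-1:ℚ))^(t.card+1) * ((p0 k).comp (X - C ((m t : ℕ) : ℚ))),
    N, fun h hNh => ?_⟩
  -- counting the good representatives
  have e2 : (h • A).card = ((antidiagonalTuple k h).filter (IsGood a)).card :=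
    card_nsmul_eq a A ha h (nsmul_eq_image a A ha h)
  have e1 : ((antidiagonalTuple k h).filter (IsGood a)).card
      + ((antidiagonalTuple k h).filter (fun x => ¬ IsGood a x)).card
      = (antidiagonalTuple k h).card :=
    Finset.card_filter_add_card_filter_not _
  -- the ugly ones form a union of up-sets
  have e3 : (antidiagonalTuple k h).filter (fun x => ¬ IsGood a x)
      = B.biUnion (fun b => (antidiagonalTuple k h).filter (fun x => b ≤ x)) := by
    ext x
    simp only [Finset.mem_biUnion, Finset.mem_filter]
    constructor
    · rintro ⟨hx, hug⟩
      obtain ⟨b, hbB, hble⟩ := hB2 x hug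
      exact ⟨b, hbB, hx, hble⟩
    · rintro ⟨b, hbB, hx, hble⟩
      refine ⟨hx, ?_⟩
      have hxb : x = b + (x - b) := funext fun i =>
        (Nat.add_sub_cancel' (hble i)).symm
      rw [hxb]
      exact not_isGood_add a _ (hB1 b hbB)
  -- inclusion-exclusion
  have e4 : ((B.biUnion (fun b => (antidiagonalTuple k h).filter (fun x => b ≤ x))).card : ℤ)
      = ∑ t ∈ F, (-1:ℤ)^(t.card+1)
          * ((antidiagonalTuple k h).filter (fun x => t.sup id ≤ x)).card := by
    rw [Finset.inclusion_exclusion_card_biUnion]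
    rw [show (F : Finset (Finset (Fin k → ℕ))) = B.powerset.filter (·.Nonempty) from hF]
    calc (∑ t : B.powerset.filter (·.Nonempty),
          (-1:ℤ)^(t.1.card+1) * (t.1.inf' (Finset.mem_filter.1 t.2).2
            (fun b => (antidiagonalTuple k h).filter (fun x => b ≤ x))).card)
        = ∑ t : B.powerset.filter (·.Nonempty), (-1:ℤ)^(t.1.card+1)
            * ((antidiagonalTuple k h).filter (fun x => t.1.sup id ≤ x)).card := by
          refine Finset.sum_congr rfl (fun t _ => ?_)
          rw [inf'_filter]
      _ = _ := Finset.sum_coe_sort _ (fun t : Finset (Fin k → ℕ) => (-1:ℤ)^(t.card+1)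
            * (((antidiagonalTuple k h).filter (fun x => t.sup id ≤ x)).card : ℤ))
  -- each term is counted by a shifted polynomial
  have e5 : ∀ t ∈ F, (((antidiagonalTuple k h).filter (fun x => t.sup id ≤ x)).card : ℚ)
      = (p0 k).eval ((h : ℚ) - (m t : ℚ)) := by
    intro t htF
    have htB : t ⊆ B := Finset.mem_powerset.1 (Finset.mem_filter.1 htF).1
    have hle : m t ≤ h := le_of_lt (lt_of_le_of_lt (hmN t htB) hNh)
    rw [card_filter_le _ _ hle, card_adt hk]
    congr 1
    exact Nat.cast_sub hle
  -- put everything together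
  have hcast : ((h • A).card : ℚ)
      = ((antidiagonalTuple k h).card : ℚ)
        - (((antidiagonalTuple k h).filter (fun x => ¬ IsGood a x)).card : ℚ) := by
    rw [e2]
    have := e1
    push_cast [← this]
    ring
  have e4' := congrArg (fun z : ℤ => (z : ℚ)) e4
  push_cast at e4'
  rw [hcast, e3, e4', card_adt hk h, eval_sub, eval_finset_sum]
  congr 1
  refine Finset.sum_congr rfl (fun t htF => ?_)
  rw [e5 t htF, eval_mul, eval_pow, eval_C, eval_comp, eval_sub, eval_X, eval_C]

end KhovanskiiAux

/-- **Khovanskii's theorem.** If `A` is a finite nonempty subset of a commutative monoid `S`,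
then the cardinality `|hA|` of the `h`-fold sumset agrees with a polynomial with rational
coefficients for all sufficiently large `h`. -/
theorem eventually_polynomial_growth
    {S : Type*} [AddCommMonoid S] [DecidableEq S]
    (A : Finset S) (hA : A.Nonempty) :
    ∃ p : Polynomial ℚ, ∃ N : ℕ, ∀ h : ℕ, N < h →
      ((h • A).card : ℚ) = Polynomial.eval (h : ℚ) p := by
  have hk : A.card ≠ 0 := (Finset.card_pos.2 hA).ne'
  refine KhovanskiiAux.main_aux hk (fun i => (A.equivFin.symm i : S)) A
    (fun s => ⟨fun hs => ?_, ?_⟩)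
  · exact ⟨A.equivFin ⟨s, hs⟩, by simp⟩
  · rintro ⟨i, rfl⟩
    exact (A.equivFin.symm i).2
end

section
/- Let A₁, …, A_r and B be finite nonempty subsets of the nonnegative integers with 0 ∈ B ∩ A₁ ∩ ⋯ ∩ A_r and gcd(A₁ ∪ ⋯ ∪ A_r) = 1. Let b* = max(B) and aᵢ* = max(Aᵢ) for i = 1, …, r. Then there exist nonnegative integers c and d and finite sets C ⊆ [0, c−2] and D ⊆ [0, d−2] such that for all sufficiently large min(h₁, …, h_r), the sumset B + h₁A₁ + ⋯ + h_rA_r equals C ∪ [c, b* + Σᵢ aᵢ*hᵢ − d] ∪ (b* + Σᵢ aᵢ*hᵢ − D), where b* + Σᵢ aᵢ*hᵢ − D denotes the set {b* + Σᵢ aᵢ*hᵢ − x : x ∈ D} and [c, m] denotes the set of integers n with c ≤ n ≤ m. -/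
open Pointwise

section HKNAux
open Finset

/-- Membership in a pointwise sum of finsets. -/
lemma mem_finsetSum {ι : Type*} [DecidableEq ι] (s : Finset ι) (f : ι → Finset ℕ) (x : ℕ) :
    x ∈ ∑ i ∈ s, f i ↔ ∃ g : ι → ℕ, (∀ i ∈ s, g i ∈ f i) ∧ ∑ i ∈ s, g i = x := by
  induction s using Finset.induction_on generalizing x with
  | empty =>
    simp only [Finset.sum_empty, Finset.mem_zero]
    exact ⟨fun h => ⟨fun _ => 0, by simp, h.symm⟩, fun ⟨g, _, h⟩ => h.symm⟩
  | insert a s ha ih =>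
    rw [Finset.sum_insert ha, Finset.mem_add]
    constructor
    · rintro ⟨y, hy, z, hz, rfl⟩
      obtain ⟨g, hg, hgs⟩ := (ih z).mp hz
      refine ⟨Function.update g a y, ?_, ?_⟩
      · intro i hi
        rcases Finset.mem_insert.mp hi with rfl | hi'
        · rw [Function.update_self]; exact hy
        · rw [Function.update_of_ne (by rintro rfl; exact ha hi')]
          exact hg i hi'
      · rw [Finset.sum_insert ha, Function.update_self]
        congr 1
        rw [← hgs]
        exact Finset.sum_congr rfl fun i hi =>
          Function.update_of_ne (by rintro rfl; exact ha hi) _ _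
    · rintro ⟨g, hg, rfl⟩
      rw [Finset.sum_insert ha]
      exact ⟨g a, hg a (Finset.mem_insert_self a s), ∑ i ∈ s, g i,
        (ih _).mpr ⟨g, fun i hi => hg i (Finset.mem_insert_of_mem hi), rfl⟩, rfl⟩

lemma mem_nsmul_le (A : Finset ℕ) (M : ℕ) (hM : ∀ a ∈ A, a ≤ M) :
    ∀ {n x : ℕ}, x ∈ n • A → x ≤ n * M := by
  intro n
  induction n with
  | zero => intro x hx; rw [zero_nsmul, Finset.mem_zero] at hx; omega
  | succ n ih =>
    intro x hx
    rw [succ_nsmul, Finset.mem_add] at hx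
    obtain ⟨y, hy, z, hz, rfl⟩ := hx
    have := ih hy
    have := hM z hz
    have : (n + 1) * M = n * M + M := by ring
    omega

lemma nsmul_mem_closure {A : Finset ℕ} {S : Set ℕ} (hAS : ↑A ⊆ S) :
    ∀ {n x : ℕ}, x ∈ n • A → x ∈ AddSubmonoid.closure S := by
  intro n
  induction n with
  | zero => intro x hx; rw [zero_nsmul, Finset.mem_zero] at hx; subst hx; exact zero_mem _
  | succ n ih =>
    intro x hx
    rw [succ_nsmul, Finset.mem_add] at hx
    obtain ⟨y, hy, z, hz, rfl⟩ := hx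
    exact add_mem (ih hy) (AddSubmonoid.subset_closure (hAS hz))

lemma mySum_subset {ι : Type*} (s : Finset ι) (f g : ι → Finset ℕ)
    (h : ∀ i ∈ s, f i ⊆ g i) : ∑ i ∈ s, f i ⊆ ∑ i ∈ s, g i := by
  classical
  induction s using Finset.induction_on with
  | empty => simp
  | insert a s ha ih =>
    rw [Finset.sum_insert ha, Finset.sum_insert ha]
    exact Finset.add_subset_add (h a (Finset.mem_insert_self a s))
      (ih fun i hi => h i (Finset.mem_insert_of_mem hi))

-- list version of low membership
lemma listSumMemAux {r : ℕ} (A : Fin r → Finset ℕ) (h0A : ∀ i, 0 ∈ A i) :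
    ∀ (l : List ℕ), (∀ a ∈ l, a ∈ Finset.univ.biUnion A) →
    ∀ h : Fin r → ℕ, (∀ i, l.length ≤ h i) →
    ∃ g : Fin r → ℕ, (∀ i, g i ∈ h i • A i) ∧ ∑ i, g i = l.sum := by
  intro l
  induction l with
  | nil =>
    intro _ h _
    exact ⟨fun _ => 0, fun i => Finset.zero_mem_nsmul (h0A i), by simp⟩
  | cons a l ih =>
    intro hmem h hlen
    obtain ⟨j, -, haj⟩ := Finset.mem_biUnion.mp (hmem a (List.mem_cons_self))
    have hlen' : ∀ i, l.length ≤ Function.update h j (h j - 1) i := by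
      intro i
      rcases eq_or_ne i j with rfl | hij
      · rw [Function.update_self]
        have := hlen i
        simp only [List.length_cons] at this
        omega
      · rw [Function.update_of_ne hij]
        have := hlen i
        simp only [List.length_cons] at this
        omega
    obtain ⟨g, hg, hgs⟩ := ih (fun b hb => hmem b (List.mem_cons_of_mem a hb))
      (Function.update h j (h j - 1)) hlen'
    refine ⟨Function.update g j (g j + a), ?_, ?_⟩
    · intro i
      rcases eq_or_ne i j with rfl | hij
      · rw [Function.update_self]
        have h1 : h i = (h i - 1) + 1 := by
          have := hlen i; simp only [List.length_cons] at this; omega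
        rw [h1, succ_nsmul, Finset.mem_add]
        have := hg i
        rw [Function.update_self] at this
        exact ⟨g i, this, a, haj, rfl⟩
      · rw [Function.update_of_ne hij]
        have := hg i
        rwa [Function.update_of_ne hij] at this
    · rw [Finset.sum_update_of_mem (Finset.mem_univ j)]
      have : ∑ i, g i = g j + ∑ i ∈ Finset.univ \ {j}, g i := by
        rw [← Finset.sum_update_of_mem (Finset.mem_univ j)]
        exact Finset.sum_congr rfl fun i _ => by
          rcases eq_or_ne i j with rfl | hij
          · rw [Function.update_self]
          · rw [Function.update_of_ne hij]
      rw [List.sum_cons, ← hgs, this]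
      ring

lemma filterSumAux : ∀ l : List ℕ, (l.filter (· ≠ 0)).sum = l.sum := by
  intro l
  induction l with
  | nil => simp
  | cons a l ih =>
    rw [List.filter_cons]
    by_cases ha : a = 0
    · subst ha
      rw [if_neg (by simp)]
      simpa using ih
    · rw [if_pos (by simpa using ha)]
      simp only [List.sum_cons]
      rw [ih]

lemma lenLeSumAux : ∀ l : List ℕ, (∀ a ∈ l, a ≠ 0) → l.length ≤ l.sum := by
  intro l
  induction l with
  | nil => simp
  | cons a l ih =>
    intro h
    have ha := h a (List.mem_cons_self)
    have := ih fun b hb => h b (List.mem_cons_of_mem a hb)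
    simp only [List.length_cons, List.sum_cons]
    omega

lemma low_mem {r : ℕ} (A : Fin r → Finset ℕ) (h0A : ∀ i, 0 ∈ A i) (B : Finset ℕ) {x : ℕ}
    (hx : ∃ b ∈ B, ∃ y ∈ AddSubmonoid.closure ((Finset.univ.biUnion A : Finset ℕ) : Set ℕ),
      b + y = x)
    (h : Fin r → ℕ) (hh : ∀ i, x ≤ h i) : x ∈ B + ∑ i, h i • A i := by
  obtain ⟨b, hb, y, hy, rfl⟩ := hx
  obtain ⟨l, hl, hls⟩ := AddSubmonoid.exists_list_of_mem_closure hy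
  set l' := l.filter (· ≠ 0) with hl'
  have hsum : l'.sum = y := by rw [hl', filterSumAux, hls]
  have hlen : l'.length ≤ y := by
    rw [← hsum]
    exact lenLeSumAux l' fun a ha => by
      have := List.of_mem_filter ha
      simpa using this
  have hmem' : ∀ a ∈ l', a ∈ Finset.univ.biUnion A := by
    intro a ha
    have := hl a (List.mem_of_mem_filter ha)
    exact_mod_cast this
  obtain ⟨g, hg, hgs⟩ := listSumMemAux A h0A l' hmem' h fun i => by
    have := hh i; omega
  rw [Finset.mem_add]
  refine ⟨b, hb, ∑ i, g i, ?_, by rw [hgs, hsum]⟩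
  exact (mem_finsetSum Finset.univ _ _).mpr ⟨g, fun i _ => hg i, rfl⟩

lemma sumset_mem_T {r : ℕ} (A : Fin r → Finset ℕ) (B : Finset ℕ) (h : Fin r → ℕ) {x : ℕ}
    (hx : x ∈ B + ∑ i, h i • A i) :
    ∃ b ∈ B, ∃ y ∈ AddSubmonoid.closure ((Finset.univ.biUnion A : Finset ℕ) : Set ℕ),
      b + y = x := by
  rw [Finset.mem_add] at hx
  obtain ⟨b, hb, z, hz, rfl⟩ := hx
  obtain ⟨g, hg, hgs⟩ := (mem_finsetSum Finset.univ _ _).mp hz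
  refine ⟨b, hb, z, ?_, rfl⟩
  rw [← hgs]
  exact AddSubmonoid.sum_mem _ fun i _ => nsmul_mem_closure
    (by intro a ha
        simp only [Finset.coe_biUnion, Finset.coe_univ, Set.mem_iUnion]
        exact ⟨i, trivial, ha⟩) (hg i (Finset.mem_univ i))

lemma sumset_le_bound {r : ℕ} (A : Fin r → Finset ℕ) (B : Finset ℕ) (M : Fin r → ℕ)
    (b : ℕ) (hM : ∀ i, ∀ a ∈ A i, a ≤ M i) (hb : ∀ x ∈ B, x ≤ b) (h : Fin r → ℕ) {x : ℕ}
    (hx : x ∈ B + ∑ i, h i • A i) : x ≤ b + ∑ i, M i * h i := by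
  rw [Finset.mem_add] at hx
  obtain ⟨y, hy, z, hz, rfl⟩ := hx
  obtain ⟨g, hg, hgs⟩ := (mem_finsetSum Finset.univ _ _).mp hz
  have : ∀ i, g i ≤ M i * h i := fun i => by
    have := mem_nsmul_le (A i) (M i) (hM i) (hg i (Finset.mem_univ i))
    rwa [mul_comm] at this
  have hzle : z ≤ ∑ i, M i * h i := hgs ▸ Finset.sum_le_sum fun i _ => this i
  have := hb y hy
  omega

lemma nsmul_reflect (A : Finset ℕ) (M : ℕ) (hM : ∀ a ∈ A, a ≤ M) :
    ∀ {n x : ℕ}, x ∈ n • A → n * M - x ∈ n • (A.image (M - ·)) := by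
  intro n
  induction n with
  | zero =>
    intro x hx
    rw [zero_nsmul, Finset.mem_zero] at hx ⊢
    omega
  | succ n ih =>
    intro x hx
    rw [succ_nsmul, Finset.mem_add] at hx
    obtain ⟨z, hz, a, ha, rfl⟩ := hx
    have hzle : z ≤ n * M := mem_nsmul_le A M hM hz
    have haM : a ≤ M := hM a ha
    have : (n + 1) * M - (z + a) = (n * M - z) + (M - a) := by
      have : (n + 1) * M = n * M + M := by ring
      omega
    rw [this, succ_nsmul, Finset.mem_add]
    exact ⟨n * M - z, ih hz, M - a, Finset.mem_image_of_mem _ ha, rfl⟩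

lemma sumset_reflect {r : ℕ} (A : Fin r → Finset ℕ) (B : Finset ℕ) (M : Fin r → ℕ) (b : ℕ)
    (hM : ∀ i, ∀ a ∈ A i, a ≤ M i) (hb : ∀ x ∈ B, x ≤ b) (h : Fin r → ℕ) {x : ℕ}
    (hx : x ∈ B + ∑ i, h i • A i) :
    (b + ∑ i, M i * h i) - x ∈ B.image (b - ·) + ∑ i, h i • ((A i).image (M i - ·)) := by
  rw [Finset.mem_add] at hx ⊢
  obtain ⟨y, hy, z, hz, rfl⟩ := hx
  obtain ⟨g, hg, hgs⟩ := (mem_finsetSum Finset.univ _ _).mp hz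
  have hgle : ∀ i, g i ≤ M i * h i := fun i => by
    have := mem_nsmul_le (A i) (M i) (hM i) (hg i (Finset.mem_univ i))
    rwa [mul_comm] at this
  have hyb : y ≤ b := hb y hy
  refine ⟨b - y, Finset.mem_image_of_mem _ hy, ∑ i, (M i * h i - g i), ?_, ?_⟩
  · exact (mem_finsetSum Finset.univ _ _).mpr ⟨fun i => M i * h i - g i,
      fun i _ => by
        have := nsmul_reflect (A i) (M i) (hM i) (hg i (Finset.mem_univ i))
        rwa [mul_comm] at this, rfl⟩
  · rw [Finset.sum_tsub_distrib Finset.univ (fun i _ => hgle i)]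
    have h1 : ∑ i, g i ≤ ∑ i, M i * h i := Finset.sum_le_sum fun i _ => hgle i
    rw [hgs] at h1 ⊢
    omega

lemma image_image_reflect (A : Finset ℕ) (M : ℕ) (hM : ∀ a ∈ A, a ≤ M) :
    (A.image (M - ·)).image (M - ·) = A := by
  ext x
  simp only [Finset.mem_image, exists_exists_and_eq_and]
  constructor
  · rintro ⟨a, ha, rfl⟩
    have := hM a ha
    simpa [Nat.sub_sub_self this] using ha
  · intro hx
    exact ⟨x, hx, Nat.sub_sub_self (hM x hx)⟩

lemma Icc_add_nsmul_pair (p q e : ℕ) (he : p + e ≤ q + 1) :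
    ∀ n : ℕ, Finset.Icc p (q + n * e) ⊆ Finset.Icc p q + n • ({0, e} : Finset ℕ) := by
  intro n
  induction n with
  | zero => simpa using fun x hx => hx
  | succ n ih =>
    intro x hx
    rw [Finset.mem_Icc] at hx
    rw [succ_nsmul, ← add_assoc, Finset.mem_add]
    by_cases hxq : x ≤ q + n * e
    · exact ⟨x, ih (Finset.mem_Icc.mpr ⟨hx.1, hxq⟩), 0, by simp, by omega⟩
    · refine ⟨x - e, ih (Finset.mem_Icc.mpr ⟨?_, ?_⟩), e, by simp, ?_⟩
      · have : (n + 1) * e = n * e + e := by ring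
        omega
      · have : (n + 1) * e = n * e + e := by ring
        omega
      · have : (n + 1) * e = n * e + e := by ring
        omega

lemma Icc_add_sum_nsmul {r : ℕ} (p q : ℕ) (e n : Fin r → ℕ)
    (he : ∀ i, p + e i ≤ q + 1) :
    Finset.Icc p (q + ∑ i, n i * e i) ⊆
      Finset.Icc p q + ∑ i, n i • ({0, e i} : Finset ℕ) := by
  classical
  have key : ∀ s : Finset (Fin r), Finset.Icc p (q + ∑ i ∈ s, n i * e i) ⊆
      Finset.Icc p q + ∑ i ∈ s, n i • ({0, e i} : Finset ℕ) := by
    intro s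
    induction s using Finset.induction_on with
    | empty => simpa using fun x hx => hx
    | insert a s ha ih =>
      rw [Finset.sum_insert ha, Finset.sum_insert ha]
      intro x hx
      have step1 : Finset.Icc p (q + (n a * e a + ∑ i ∈ s, n i * e i)) ⊆
          Finset.Icc p (q + ∑ i ∈ s, n i * e i) + n a • ({0, e a} : Finset ℕ) := by
        have := Icc_add_nsmul_pair p (q + ∑ i ∈ s, n i * e i) (e a)
          (by have := he a; omega) (n a)
        intro y hy
        apply this
        rw [Finset.mem_Icc] at hy ⊢
        omega
      have := step1 hx
      rw [Finset.mem_add] at this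
      obtain ⟨y, hy, z, hz, rfl⟩ := this
      have hy2 := ih hy
      rw [Finset.mem_add] at hy2
      obtain ⟨u, hu, v, hv, rfl⟩ := hy2
      rw [Finset.mem_add]
      exact ⟨u, hu, z + v, Finset.add_mem_add hz hv, by ring⟩
  exact key Finset.univ

lemma sum_split {r : ℕ} (A : Fin r → Finset ℕ) (B : Finset ℕ) (h k : Fin r → ℕ)
    (hk : ∀ i, k i ≤ h i) (X : Fin r → Finset ℕ) (hX : ∀ i, X i ⊆ A i) :
    (B + ∑ i, k i • A i) + ∑ i, (h i - k i) • X i ⊆ B + ∑ i, h i • A i := by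
  rw [add_assoc]
  apply Finset.add_subset_add_left
  rw [← Finset.sum_add_distrib]
  apply mySum_subset
  intro i _
  have h1 : k i • A i + (h i - k i) • X i ⊆ k i • A i + (h i - k i) • A i :=
    Finset.add_subset_add_left (Finset.nsmul_subset_nsmul_left (hX i))
  have h2 : k i • A i + (h i - k i) • A i = h i • A i := by
    rw [← add_nsmul]
    congr 1
    have := hk i
    omega
  rw [← h2]
  exact h1

lemma bezout_closure (S : Finset ℕ) :
    ∃ x y : ℕ, x ∈ AddSubmonoid.closure (S : Set ℕ) ∧ y ∈ AddSubmonoid.closure (S : Set ℕ) ∧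
      (x : ℤ) = y + S.gcd id := by
  induction S using Finset.induction_on with
  | empty => exact ⟨0, 0, zero_mem _, zero_mem _, by simp⟩
  | insert a S ha ih =>
    obtain ⟨x, y, hx, hy, hxy⟩ := ih
    have hsub : (S : Set ℕ) ⊆ ((insert a S : Finset ℕ) : Set ℕ) := by
      simp only [Finset.coe_insert]
      exact Set.subset_insert _ _
    have hx' : x ∈ AddSubmonoid.closure ((insert a S : Finset ℕ) : Set ℕ) :=
      AddSubmonoid.closure_mono hsub hx
    have hy' : y ∈ AddSubmonoid.closure ((insert a S : Finset ℕ) : Set ℕ) :=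
      AddSubmonoid.closure_mono hsub hy
    have ha' : a ∈ AddSubmonoid.closure ((insert a S : Finset ℕ) : Set ℕ) :=
      AddSubmonoid.subset_closure (by simp)
    set g := S.gcd id with hg
    set u := Nat.gcdA a g with hu
    set v := Nat.gcdB a g with hv
    have hbez : ((Nat.gcd a g : ℕ) : ℤ) = a * u + g * v := Nat.gcd_eq_gcd_ab a g
    refine ⟨u.toNat * a + v.toNat * x + (-v).toNat * y,
            (-u).toNat * a + (-v).toNat * x + v.toNat * y, ?_, ?_, ?_⟩
    · refine add_mem (add_mem ?_ ?_) ?_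
      · simpa [smul_eq_mul] using AddSubmonoid.nsmul_mem _ ha' u.toNat
      · simpa [smul_eq_mul] using AddSubmonoid.nsmul_mem _ hx' v.toNat
      · simpa [smul_eq_mul] using AddSubmonoid.nsmul_mem _ hy' (-v).toNat
    · refine add_mem (add_mem ?_ ?_) ?_
      · simpa [smul_eq_mul] using AddSubmonoid.nsmul_mem _ ha' (-u).toNat
      · simpa [smul_eq_mul] using AddSubmonoid.nsmul_mem _ hx' (-v).toNat
      · simpa [smul_eq_mul] using AddSubmonoid.nsmul_mem _ hy' v.toNat
    · rw [Finset.gcd_insert]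
      have hgcd_eq : (GCDMonoid.gcd (id a) g : ℕ) = Nat.gcd a g := by
        simp [Nat.gcd_eq_gcd_ab]
        rfl
      rw [hgcd_eq]
      have h1 : (u.toNat : ℤ) - (-u).toNat = u := by omega
      have h2 : (v.toNat : ℤ) - (-v).toNat = v := by omega
      push_cast
      nlinarith [h1, h2, hbez, hxy]

lemma closure_cofinite (S : Finset ℕ) (hgcd : S.gcd id = 1) :
    ∃ G : ℕ, ∀ n : ℕ, G ≤ n → n ∈ AddSubmonoid.closure (S : Set ℕ) := by
  obtain ⟨x, y, hx, hy, hxy⟩ := bezout_closure S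
  rw [hgcd] at hxy
  have hxy' : x = y + 1 := by exact_mod_cast hxy
  subst hxy'
  by_cases hy0 : y = 0
  · subst hy0
    refine ⟨0, fun n _ => ?_⟩
    have := AddSubmonoid.nsmul_mem _ hx n
    simpa [smul_eq_mul] using this
  · refine ⟨y * y, fun n hn => ?_⟩
    set q := n / y with hq
    set s := n % y with hs
    have hmod : y * q + s = n := Nat.div_add_mod n y
    have hslt : s < y := Nat.mod_lt _ (Nat.pos_of_ne_zero hy0)
    have hqy : y ≤ q := by
      rw [hq, Nat.le_div_iff_mul_le (Nat.pos_of_ne_zero hy0)]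
      nlinarith
    have hval : s * (y + 1) + (q - s) * y = n := by
      have h1 : (q - s) * y = q * y - s * y := Nat.sub_mul q s y
      have h2 : s * y ≤ q * y := Nat.mul_le_mul_right y (le_of_lt (lt_of_lt_of_le hslt hqy))
      have h3 : s * (y + 1) = s * y + s := by ring
      have h4 : q * y = y * q := mul_comm q y
      omega
    rw [← hval]
    refine add_mem ?_ ?_
    · simpa [smul_eq_mul] using AddSubmonoid.nsmul_mem _ hx s
    · simpa [smul_eq_mul] using AddSubmonoid.nsmul_mem _ hy (q - s)

theorem main_aux
    (r : ℕ) (hr : 0 < r) (A : Fin r → Finset ℕ) (B : Finset ℕ)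
    (h0A : ∀ i, 0 ∈ A i) (h0B : 0 ∈ B)
    (hgcd : (Finset.univ.biUnion A).gcd id = 1)
    (astar : Fin r → ℕ) (bstar : ℕ)
    (hA1 : ∀ i, astar i ∈ A i) (hAle : ∀ i, ∀ a ∈ A i, a ≤ astar i)
    (hB1 : bstar ∈ B) (hBle : ∀ x ∈ B, x ≤ bstar) :
    ∃ c d : ℕ, ∃ C D : Finset ℕ,
      (∀ x ∈ C, x + 2 ≤ c) ∧ (∀ x ∈ D, x + 2 ≤ d) ∧
      ∃ N : ℕ, ∀ h : Fin r → ℕ, (∀ i, N < h i) →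
        B + ∑ i, h i • A i =
          C ∪ Finset.Icc c (bstar + ∑ i, astar i * h i - d) ∪
            D.image (fun x => bstar + ∑ i, astar i * h i - x) := by
  classical
  set A' : Fin r → Finset ℕ := fun i => (A i).image (astar i - ·) with hA'def
  set B' : Finset ℕ := B.image (bstar - ·) with hB'def
  have h0A' : ∀ i, 0 ∈ A' i := fun i =>
    Finset.mem_image.mpr ⟨astar i, hA1 i, Nat.sub_self _⟩
  have h0B' : 0 ∈ B' := Finset.mem_image.mpr ⟨bstar, hB1, Nat.sub_self _⟩
  have hA'1 : ∀ i, astar i ∈ A' i := fun i =>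
    Finset.mem_image.mpr ⟨0, h0A i, Nat.sub_zero _⟩
  have hB'1 : bstar ∈ B' := Finset.mem_image.mpr ⟨0, h0B, Nat.sub_zero _⟩
  have hA'le : ∀ i, ∀ a ∈ A' i, a ≤ astar i := by
    intro i a ha
    obtain ⟨x, -, rfl⟩ := Finset.mem_image.mp ha
    omega
  have hB'le : ∀ x ∈ B', x ≤ bstar := by
    intro x hx
    obtain ⟨y, -, rfl⟩ := Finset.mem_image.mp hx
    omega
  have hA'' : ∀ i, (A' i).image (astar i - ·) = A i := fun i =>
    image_image_reflect _ _ (hAle i)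
  have hB'' : B'.image (bstar - ·) = B := image_image_reflect _ _ hBle
  -- gcd of reflected union is 1
  have hgcd' : (Finset.univ.biUnion A').gcd id = 1 := by
    have hdvd : (Finset.univ.biUnion A').gcd id ∣ 1 := by
      rw [← hgcd]
      apply Finset.dvd_gcd
      intro b hb
      obtain ⟨i, -, hbi⟩ := Finset.mem_biUnion.mp hb
      have h1 : (Finset.univ.biUnion A').gcd id ∣ astar i :=
        Finset.gcd_dvd (Finset.mem_biUnion.mpr ⟨i, Finset.mem_univ i, hA'1 i⟩)
      have h2 : (Finset.univ.biUnion A').gcd id ∣ astar i - b :=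
        Finset.gcd_dvd (Finset.mem_biUnion.mpr ⟨i, Finset.mem_univ i,
          Finset.mem_image.mpr ⟨b, hbi, rfl⟩⟩)
      have h3 := Nat.dvd_sub h1 h2
      rwa [Nat.sub_sub_self (hAle i b hbi)] at h3
    exact Nat.dvd_one.mp hdvd
  set T : ℕ → Prop := fun x => ∃ b ∈ B,
    ∃ y ∈ AddSubmonoid.closure ((Finset.univ.biUnion A : Finset ℕ) : Set ℕ), b + y = x
    with hTdef
  set T' : ℕ → Prop := fun x => ∃ b ∈ B',
    ∃ y ∈ AddSubmonoid.closure ((Finset.univ.biUnion A' : Finset ℕ) : Set ℕ), b + y = x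
    with hT'def
  obtain ⟨G, hG⟩ := closure_cofinite _ hgcd
  obtain ⟨G', hG'⟩ := closure_cofinite _ hgcd'
  have hPex : ∃ c, ∀ n, c ≤ n → T n :=
    ⟨G, fun n hn => ⟨0, h0B, n, hG n hn, zero_add n⟩⟩
  have hP'ex : ∃ d, ∀ n, d ≤ n → T' n :=
    ⟨G', fun n hn => ⟨0, h0B', n, hG' n hn, zero_add n⟩⟩
  set c := Nat.find hPex with hcdef
  set d := Nat.find hP'ex with hddef
  have hc : ∀ n, c ≤ n → T n := Nat.find_spec hPex
  have hd : ∀ n, d ≤ n → T' n := Nat.find_spec hP'ex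
  have hcm : 0 < c → ¬ T (c - 1) := by
    intro h0c
    have hmin := Nat.find_min hPex (show c - 1 < c by omega)
    push_neg at hmin
    obtain ⟨n, hn1, hn2⟩ := hmin
    rcases Nat.lt_or_ge n c with hlt | hge
    · have : n = c - 1 := by omega
      rwa [← this]
    · exact absurd (hc n hge) hn2
  have hdm : 0 < d → ¬ T' (d - 1) := by
    intro h0d
    have hmin := Nat.find_min hP'ex (show d - 1 < d by omega)
    push_neg at hmin
    obtain ⟨n, hn1, hn2⟩ := hmin
    rcases Nat.lt_or_ge n d with hlt | hge
    · have : n = d - 1 := by omega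
      rwa [← this]
    · exact absurd (hd n hge) hn2
  -- a nonzero astar
  have hj : ∃ j, 1 ≤ astar j := by
    by_contra hcon
    push_neg at hcon
    have : (Finset.univ.biUnion A).gcd id = 0 := by
      rw [Finset.gcd_eq_zero_iff]
      intro x hx
      obtain ⟨i, -, hxi⟩ := Finset.mem_biUnion.mp hx
      have := hAle i x hxi
      have := hcon i
      simp only [id_eq]
      omega
    omega
  obtain ⟨j, hj1⟩ := hj
  set L := ∑ i, astar i with hLdef
  have hiL : ∀ i, astar i ≤ L :=
    fun i => Finset.single_le_sum (fun i _ => Nat.zero_le (astar i)) (Finset.mem_univ i)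
  set K := c + d + L + 1 with hKdef
  refine ⟨c, d, (Finset.range c).filter T, (Finset.range d).filter T', ?_, ?_,
    bstar + 2 * K * L + K + G + G' + 2, ?_⟩
  · intro x hx
    rw [Finset.mem_filter, Finset.mem_range] at hx
    rcases Nat.eq_zero_or_pos c with h0 | h0
    · omega
    by_contra hcon
    have hxeq : x = c - 1 := by omega
    exact (hcm h0) (hxeq ▸ hx.2)
  · intro x hx
    rw [Finset.mem_filter, Finset.mem_range] at hx
    rcases Nat.eq_zero_or_pos d with h0 | h0
    · omega
    by_contra hcon
    have hxeq : x = d - 1 := by omega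
    exact (hdm h0) (hxeq ▸ hx.2)
  intro h hN
  set N := bstar + 2 * K * L + K + G + G' + 2 with hNdef
  set m := bstar + ∑ i, astar i * h i with hmdef
  have hSle : ∑ i, astar i * h i ≥ h j := by
    calc h j = 1 * h j := (one_mul _).symm
    _ ≤ astar j * h j := Nat.mul_le_mul_right _ hj1
    _ ≤ ∑ i, astar i * h i :=
        Finset.single_le_sum (f := fun i => astar i * h i) (fun i _ => Nat.zero_le _)
          (Finset.mem_univ j)
  have hcN : c ≤ N := by have := Nat.find_min' hPex (fun n hn => ⟨0, h0B, n, hG n hn, zero_add n⟩); omega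
  have hdN : d ≤ N := by have := Nat.find_min' hP'ex (fun n hn => ⟨0, h0B', n, hG' n hn, zero_add n⟩); omega
  -- basic claims
  have claim_T : ∀ {x}, x ∈ B + ∑ i, h i • A i → T x := fun hx => sumset_mem_T A B h hx
  have claim_le : ∀ {x}, x ∈ B + ∑ i, h i • A i → x ≤ m :=
    fun hx => sumset_le_bound A B astar bstar hAle hBle h hx
  have claim_refl : ∀ {x}, x ∈ B + ∑ i, h i • A i → m - x ∈ B' + ∑ i, h i • A' i :=
    fun hx => sumset_reflect A B astar bstar hAle hBle h hx
  have claim_refl' : ∀ {x}, x ∈ B' + ∑ i, h i • A' i → m - x ∈ B + ∑ i, h i • A i := by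
    intro x hx
    have := sumset_reflect A' B' astar bstar hA'le hB'le h hx
    rw [hB''] at this
    have heq : (∑ i, h i • ((A' i).image (astar i - ·))) = ∑ i, h i • A i := by
      apply Finset.sum_congr rfl
      intro i _
      rw [hA'' i]
    rwa [heq] at this
  have claim_T' : ∀ {x}, x ∈ B' + ∑ i, h i • A' i → T' x := fun hx => sumset_mem_T A' B' h hx
  have claim_low : ∀ {x}, T x → (∀ i, x ≤ h i) → x ∈ B + ∑ i, h i • A i :=
    fun hx hh => low_mem A h0A B hx h hh
  have claim_low' : ∀ {x}, T' x → (∀ i, x ≤ h i) → x ∈ B' + ∑ i, h i • A' i :=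
    fun hx hh => low_mem A' h0A' B' hx h hh
  -- middle interval
  set W := K + ∑ i, (h i - K) * astar i with hWdef
  have hKh : ∀ i, K ≤ h i := fun i => by have := hN i; omega
  have hWsum : ∑ i, (h i - K) * astar i + K * L = ∑ i, astar i * h i := by
    have : ∀ i, (h i - K) * astar i + K * astar i = astar i * h i := by
      intro i
      have := hKh i
      rw [Nat.sub_mul]
      have h2 : K * astar i ≤ h i * astar i := Nat.mul_le_mul_right _ (hKh i)
      have h3 : astar i * h i = h i * astar i := mul_comm _ _
      omega
    calc ∑ i, (h i - K) * astar i + K * L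
        = ∑ i, ((h i - K) * astar i + K * astar i) := by
          rw [Finset.sum_add_distrib, hLdef, Finset.mul_sum]
      _ = ∑ i, astar i * h i := Finset.sum_congr rfl fun i _ => this i
  have hXsub : ∀ i, ({0, astar i} : Finset ℕ) ⊆ A i := by
    intro i
    intro x hx
    rcases Finset.mem_insert.mp hx with rfl | hx
    · exact h0A i
    · rw [Finset.mem_singleton] at hx
      subst hx
      exact hA1 i
  have hX'sub : ∀ i, ({0, astar i} : Finset ℕ) ⊆ A' i := by
    intro i
    intro x hx
    rcases Finset.mem_insert.mp hx with rfl | hx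
    · exact h0A' i
    · rw [Finset.mem_singleton] at hx
      subst hx
      exact hA'1 i
  have bottomInt : Finset.Icc c W ⊆ B + ∑ i, h i • A i := by
    have step0 : Finset.Icc c K ⊆ B + ∑ i, (fun _ : Fin r => K) i • A i := by
      intro x hx
      rw [Finset.mem_Icc] at hx
      exact low_mem A h0A B (hc x hx.1) (fun _ => K) (fun i => hx.2)
    have step1 : Finset.Icc c W ⊆
        Finset.Icc c K + ∑ i, (h i - K) • ({0, astar i} : Finset ℕ) := by
      rw [hWdef]
      have := Icc_add_sum_nsmul c K astar (fun i => h i - K)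
        (fun i => by have := hiL i; omega)
      beta_reduce at this
      intro x hx
      apply this
      rw [Finset.mem_Icc] at hx ⊢
      omega
    intro x hx
    have hx1 := step1 hx
    rw [Finset.mem_add] at hx1
    obtain ⟨y, hy, z, hz, rfl⟩ := hx1
    exact sum_split A B h (fun _ => K) hKh (fun i => ({0, astar i} : Finset ℕ)) hXsub
      (Finset.add_mem_add (step0 hy) hz)
  have topInt' : Finset.Icc d W ⊆ B' + ∑ i, h i • A' i := by
    have step0 : Finset.Icc d K ⊆ B' + ∑ i, (fun _ : Fin r => K) i • A' i := by
      intro x hx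
      rw [Finset.mem_Icc] at hx
      exact low_mem A' h0A' B' (hd x hx.1) (fun _ => K) (fun i => hx.2)
    have step1 : Finset.Icc d W ⊆
        Finset.Icc d K + ∑ i, (h i - K) • ({0, astar i} : Finset ℕ) := by
      rw [hWdef]
      have := Icc_add_sum_nsmul d K astar (fun i => h i - K)
        (fun i => by have := hiL i; omega)
      beta_reduce at this
      intro x hx
      apply this
      rw [Finset.mem_Icc] at hx ⊢
      omega
    intro x hx
    have hx1 := step1 hx
    rw [Finset.mem_add] at hx1
    obtain ⟨y, hy, z, hz, rfl⟩ := hx1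
    exact sum_split A' B' h (fun _ => K) hKh (fun i => ({0, astar i} : Finset ℕ)) hX'sub
      (Finset.add_mem_add (step0 hy) hz)
  have hcover : 2 * W + 1 ≥ m := by
    have hKL : K * L ≤ ∑ i, astar i * h i := by omega
    have hhj := hN j
    have : ∑ i, astar i * h i ≥ bstar + 2 * (K * L) := by
      have h2KL : 2 * K * L = 2 * (K * L) := by ring
      omega
    omega
  have hdm2 : d + 1 ≤ m := by
    have := hN j
    omega
  have middleInt : ∀ x, c ≤ x → x ≤ m - d → x ∈ B + ∑ i, h i • A i := by
    intro x hxc hxd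
    by_cases hxW : x ≤ W
    · exact bottomInt (Finset.mem_Icc.mpr ⟨hxc, hxW⟩)
    · have hmem : m - x ∈ Finset.Icc d W := by
        rw [Finset.mem_Icc]
        omega
      have := claim_refl' (topInt' hmem)
      have hxm : x ≤ m := by omega
      rwa [Nat.sub_sub_self hxm] at this
  -- final set equality
  ext x
  simp only [Finset.mem_union, Finset.mem_filter, Finset.mem_range, Finset.mem_Icc,
    Finset.mem_image]
  constructor
  · intro hx
    have hTx := claim_T hx
    have hxm := claim_le hx
    have hT'mx := claim_T' (claim_refl hx)
    by_cases h1 : x < c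
    · exact Or.inl (Or.inl ⟨h1, hTx⟩)
    by_cases h2 : d ≤ m - x
    · exact Or.inl (Or.inr ⟨by omega, by omega⟩)
    · refine Or.inr ⟨m - x, ⟨by omega, hT'mx⟩, by omega⟩
  · intro hx
    rcases hx with ((⟨hx1, hx2⟩ | ⟨hx1, hx2⟩) | ⟨y, ⟨hy1, hy2⟩, rfl⟩)
    · exact claim_low hx2 (fun i => by have := hN i; omega)
    · exact middleInt x hx1 hx2
    · have hymem := claim_low' hy2 (fun i => by have := hN i; omega)
      exact claim_refl' hymem

end HKNAux

/-- **Han–Kirfel–Nathanson structure theorem.** Let `A₁, …, A_r, B` be finite nonempty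
subsets of `ℕ` with `0 ∈ B ∩ A₁ ∩ ⋯ ∩ A_r` and `gcd(A₁ ∪ ⋯ ∪ A_r) = 1`, and let
`b* = max B`, `aᵢ* = max Aᵢ`.  Then there are `c, d ∈ ℕ` and finite sets
`C ⊆ [0, c−2]`, `D ⊆ [0, d−2]` such that for all sufficiently large `min(h₁, …, h_r)`,
`B + h₁A₁ + ⋯ + h_rA_r = C ∪ [c, b* + Σᵢ aᵢ*hᵢ − d] ∪ (b* + Σᵢ aᵢ*hᵢ − D)`. -/
theorem structure_of_linear_forms_of_sumsets
    (r : ℕ) (hr : 0 < r) (A : Fin r → Finset ℕ) (B : Finset ℕ)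
    (h0A : ∀ i, 0 ∈ A i) (h0B : 0 ∈ B)
    (hgcd : (Finset.univ.biUnion A).gcd id = 1) :
    ∃ c d : ℕ, ∃ C D : Finset ℕ,
      (∀ x ∈ C, x + 2 ≤ c) ∧ (∀ x ∈ D, x + 2 ≤ d) ∧
      ∃ N : ℕ, ∀ h : Fin r → ℕ, (∀ i, N < h i) →
        B + ∑ i, h i • A i =
          C ∪ Finset.Icc c
              (B.max' ⟨0, h0B⟩ + ∑ i, (A i).max' ⟨0, h0A i⟩ * h i - d) ∪
            D.image (fun x => B.max' ⟨0, h0B⟩ + ∑ i, (A i).max' ⟨0, h0A i⟩ * h i - x) :=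
  main_aux r hr A B h0A h0B hgcd (fun i => (A i).max' ⟨0, h0A i⟩) (B.max' ⟨0, h0B⟩)
    (fun i => Finset.max'_mem _ _) (fun i a ha => Finset.le_max' _ a ha)
    (Finset.max'_mem _ _) (fun x hx => Finset.le_max' _ x hx)
end

section
/- Let A₁, …, A_r and B be finite nonempty subsets of the nonnegative integers with 0 ∈ B ∩ A₁ ∩ ⋯ ∩ A_r and gcd(A₁ ∪ ⋯ ∪ A_r) = 1. Let b* = max(B) and aᵢ* = max(Aᵢ) for i = 1, …, r. Then there exists an integer Δ such that |B + h₁A₁ + ⋯ + h_rA_r| = a₁*h₁ + ⋯ + a_r*h_r + b* + 1 − Δ for all sufficiently large min(h₁, …, h_r); that is, the growth function is eventually a multilinear function of h₁, …, h_r. -/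
open Pointwise

namespace HKNAux
open Finset

lemma zero_mem_nsmul {A : Finset ℕ} (h : 0 ∈ A) (n : ℕ) : 0 ∈ n • A := by
  induction n with
  | zero => simp [Finset.mem_zero]
  | succ k ih =>
      rw [succ_nsmul]
      exact Finset.mem_add.2 ⟨0, ih, 0, h, by simp⟩

lemma nsmul_subset_nsmul {A : Finset ℕ} (h : 0 ∈ A) {m n : ℕ} (hmn : m ≤ n) :
    m • A ⊆ n • A := by
  obtain ⟨k, rfl⟩ := Nat.exists_eq_add_of_le hmn
  rw [add_nsmul]
  intro x hx
  exact Finset.mem_add.2 ⟨x, hx, 0, zero_mem_nsmul h k, by simp⟩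

lemma mul_mem_nsmul {A : Finset ℕ} {a : ℕ} (ha : a ∈ A) (k : ℕ) : k * a ∈ k • A := by
  induction k with
  | zero => simp [Finset.mem_zero]
  | succ m ih =>
      rw [succ_nsmul]
      exact Finset.mem_add.2 ⟨m * a, ih, a, ha, by ring⟩

lemma mem_nsmul_le {A : Finset ℕ} {n x : ℕ} (hx : x ∈ n • A) {a : ℕ}
    (ha : ∀ y ∈ A, y ≤ a) : x ≤ n * a := by
  induction n generalizing x with
  | zero => simp_all [Finset.mem_zero]
  | succ m ih =>
      rw [succ_nsmul] at hx
      obtain ⟨y, hy, z, hz, rfl⟩ := Finset.mem_add.1 hx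
      have := ih hy
      have := ha z hz
      nlinarith

lemma sum_mem_sum_nsmul {ι : Type*} (s : Finset ι) (q e : ι → ℕ) {A : Finset ℕ}
    (h : ∀ x ∈ s, e x ∈ q x • A) : (∑ x ∈ s, e x) ∈ (∑ x ∈ s, q x) • A := by
  induction s using Finset.cons_induction with
  | empty => simp [Finset.mem_zero]
  | cons a s ha ih =>
      rw [Finset.sum_cons, Finset.sum_cons, add_nsmul]
      exact Finset.mem_add.2 ⟨e a, h a (Finset.mem_cons_self _ _), ∑ x ∈ s, e x,
        ih (fun x hx => h x (Finset.mem_cons.2 (Or.inr hx))), rfl⟩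

lemma mem_finsum {ι : Type*} (s : Finset ι) (f : ι → Finset ℕ) (x : ℕ) :
    x ∈ ∑ i ∈ s, f i ↔ ∃ u : ι → ℕ, (∀ i ∈ s, u i ∈ f i) ∧ ∑ i ∈ s, u i = x := by
  classical
  induction s using Finset.cons_induction generalizing x with
  | empty =>
      simp only [Finset.sum_empty, Finset.mem_zero]
      constructor
      · rintro rfl; exact ⟨fun _ => 0, by simp, by simp⟩
      · rintro ⟨u, -, h⟩; simpa using h.symm
  | cons a s ha ih =>
      rw [Finset.sum_cons]
      constructor
      · intro hx
        obtain ⟨y, hy, z, hz, rfl⟩ := Finset.mem_add.1 hx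
        obtain ⟨u, hu, rfl⟩ := (ih z).1 hz
        refine ⟨Function.update u a y, ?_, ?_⟩
        · intro i hi
          rcases Finset.mem_cons.1 hi with rfl | hi2
          · simp [hy]
          · have hne : i ≠ a := by rintro rfl; exact ha hi2
            rw [Function.update_of_ne hne]
            exact hu i hi2
        · rw [Finset.sum_cons, Function.update_self]
          congr 1
          refine Finset.sum_congr rfl fun i hi => ?_
          have hne : i ≠ a := by rintro rfl; exact ha hi
          exact Function.update_of_ne hne _ _
      · rintro ⟨u, hu, rfl⟩
        rw [Finset.sum_cons]
        exact Finset.mem_add.2 ⟨u a, hu a (Finset.mem_cons_self _ _), ∑ i ∈ s, u i,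
          (ih _).2 ⟨u, fun i hi => hu i (Finset.mem_cons.2 (Or.inr hi)), rfl⟩, rfl⟩

lemma sum_subset_sum {ι : Type*} (s : Finset ι) (f g : ι → Finset ℕ)
    (h : ∀ i ∈ s, f i ⊆ g i) : ∑ i ∈ s, f i ⊆ ∑ i ∈ s, g i := by
  induction s using Finset.cons_induction with
  | empty => simp
  | cons a s ha ih =>
      rw [Finset.sum_cons, Finset.sum_cons]
      exact Finset.add_subset_add (h a (Finset.mem_cons_self _ _))
        (ih fun i hi => h i (Finset.mem_cons.2 (Or.inr hi)))

lemma bezout (s : Finset ℕ) : ∃ c : ℕ → ℤ, ∑ x ∈ s, c x * x = ((s.gcd id : ℕ) : ℤ) := by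
  classical
  induction s using Finset.induction_on with
  | empty => exact ⟨0, by simp⟩
  | insert a s ha ih =>
      obtain ⟨c, hc⟩ := ih
      refine ⟨fun x => if x = a then Nat.gcdA a (s.gcd id) else c x * Nat.gcdB a (s.gcd id), ?_⟩
      rw [Finset.sum_insert ha, Finset.gcd_insert]
      have h1 : ∀ x ∈ s, (if x = a then Nat.gcdA a (s.gcd id) else c x * Nat.gcdB a (s.gcd id)) * x
          = c x * x * Nat.gcdB a (s.gcd id) := by
        intro x hx
        rw [if_neg (by rintro rfl; exact ha hx)]
        ring
      rw [Finset.sum_congr rfl h1, ← Finset.sum_mul, hc]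
      simp only [if_pos rfl]
      have h2 : GCDMonoid.gcd (id a) (s.gcd id) = Nat.gcd a (s.gcd id) := rfl
      rw [h2]
      push_cast [Nat.gcd_eq_gcd_ab a (s.gcd id)]
      ring

lemma frobenius (G : Finset ℕ) (hpos : ∀ x ∈ G, 0 < x) (hg : G.gcd id = 1) :
    ∃ F : ℕ, 0 < F ∧ ∀ n, F ≤ n → ∃ d : ℕ → ℕ, ∑ x ∈ G, d x * x = n ∧ ∑ x ∈ G, d x ≤ n := by
  classical
  have hne : G.Nonempty := by
    rcases G.eq_empty_or_nonempty with rfl | h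
    · simp at hg
    · exact h
  obtain ⟨g₀, hg₀⟩ := hne
  have hg₀pos : 0 < g₀ := hpos g₀ hg₀
  obtain ⟨c, hc⟩ := bezout G
  rw [hg] at hc
  refine ⟨g₀ * (∑ x ∈ G, x) + 1, Nat.succ_pos _, fun n hn => ?_⟩
  set e : ℕ → ℕ := fun x => ((n * c x) % (g₀ : ℤ)).toNat with he
  have hecast : ∀ x, ((e x : ℤ)) = (n * c x) % (g₀ : ℤ) := fun x =>
    Int.toNat_of_nonneg (Int.emod_nonneg _ (by exact_mod_cast hg₀pos.ne'))
  have helt : ∀ x, e x < g₀ := by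
    intro x
    have h2 := Int.emod_lt_of_pos (n * c x) (by exact_mod_cast hg₀pos : (0:ℤ) < g₀)
    have h3 := hecast x
    omega
  set t : ℕ → ℤ := fun x => (n * c x) / (g₀ : ℤ) with ht
  have hkey : (n : ℤ) = ∑ x ∈ G, (e x : ℤ) * x + (g₀ : ℤ) * ∑ x ∈ G, t x * x := by
    have h1 : (n : ℤ) = ∑ x ∈ G, (n * c x) * x := by
      calc (n:ℤ) = n * ∑ x ∈ G, c x * x := by rw [hc]; push_cast; ring
      _ = ∑ x ∈ G, (n * c x) * x := by
            rw [Finset.mul_sum]; exact Finset.sum_congr rfl fun x _ => by ring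
    rw [h1, Finset.mul_sum, ← Finset.sum_add_distrib]
    refine Finset.sum_congr rfl fun x _ => ?_
    rw [hecast x]
    have h2 := Int.mul_ediv_add_emod (n * c x) (g₀ : ℤ)
    have ht2 : t x = (n * c x) / (g₀ : ℤ) := rfl
    nlinarith [h2]
  set D : ℕ := ∑ x ∈ G, e x * x with hD
  have hDcast : (D : ℤ) = ∑ x ∈ G, (e x : ℤ) * x := by push_cast [hD]; rfl
  have hDlt : D < n := by
    have h1 : D ≤ g₀ * ∑ x ∈ G, x := by
      rw [Finset.mul_sum]
      exact Finset.sum_le_sum fun x _ => Nat.mul_le_mul_right x (le_of_lt (helt x))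
    omega
  set T : ℤ := ∑ x ∈ G, t x * x with hT
  have hDT : (D : ℤ) + (g₀ : ℤ) * T = n := by rw [hDcast]; linarith [hkey]
  have hTnn : 0 ≤ T := by
    rcases le_or_gt 0 T with h | h
    · exact h
    · exfalso
      have : (g₀ : ℤ) * T < 0 := mul_neg_of_pos_of_neg (by exact_mod_cast hg₀pos) h
      have h2 : (D : ℤ) < n := by exact_mod_cast hDlt
      omega
  set k : ℕ := T.toNat with hk
  have hkT : (k : ℤ) = T := Int.toNat_of_nonneg hTnn
  have hval : ∑ x ∈ G, (e x + if x = g₀ then k else 0) * x = n := by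
    have hsum : ∑ x ∈ G, (e x + if x = g₀ then k else 0) * x = D + k * g₀ := by
      have h1 : ∀ x ∈ G, (e x + if x = g₀ then k else 0) * x
          = e x * x + (if x = g₀ then k * x else 0) := by
        intro x _
        split <;> ring
      rw [Finset.sum_congr rfl h1, Finset.sum_add_distrib]
      congr 1
      rw [Finset.sum_ite_eq' G g₀ (fun x => k * x), if_pos hg₀]
    rw [hsum]
    have h3 : ((D : ℤ)) + (k : ℤ) * g₀ = (n : ℤ) := by rw [hkT]; linarith [hDT]
    exact_mod_cast h3
  refine ⟨fun x => e x + if x = g₀ then k else 0, hval, ?_⟩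
  calc ∑ x ∈ G, (e x + if x = g₀ then k else 0)
      ≤ ∑ x ∈ G, (e x + if x = g₀ then k else 0) * x :=
        Finset.sum_le_sum fun x hx => Nat.le_mul_of_pos_right _ (hpos x hx)
    _ = n := hval

lemma update_sum_key {r : ℕ} (a v : Fin r → ℕ) (i : Fin r) (w : ℕ) :
    ∑ j, Function.update v i w j * a j + v i * a i
      = ∑ j, v j * a j + w * a i := by
  classical
  rw [← Finset.add_sum_erase _ (fun j => Function.update v i w j * a j) (Finset.mem_univ i),
      ← Finset.add_sum_erase _ (fun j => v j * a j) (Finset.mem_univ i)]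
  have h1 : ∑ j ∈ Finset.univ.erase i, Function.update v i w j * a j
      = ∑ j ∈ Finset.univ.erase i, v j * a j :=
    Finset.sum_congr rfl fun j hj => by
      rw [Function.update_of_ne (Finset.ne_of_mem_erase hj)]
  rw [h1, Function.update_self]
  ring

lemma greedy {r : ℕ} (a : Fin r → ℕ) (F : ℕ) :
    ∀ n : ℕ, ∀ c : Fin r → ℕ, F ≤ n → n ≤ F + ∑ i, c i * a i →
    ∃ (k : Fin r → ℕ) (m : ℕ), (∀ i, k i ≤ c i) ∧ n = ∑ i, k i * a i + m ∧
      F ≤ m ∧ m ≤ F + Finset.univ.sup a := by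
  classical
  intro n
  induction n using Nat.strong_induction_on with
  | _ n ih =>
    intro c hF hub
    rcases le_or_gt n (F + Finset.univ.sup a) with h | h
    · exact ⟨0, n, fun i => Nat.zero_le _, by simp, hF, h⟩
    · have hpos : 0 < ∑ i, c i * a i := by by_contra h0; push_neg at h0; omega
      have hex : ∃ i, 0 < c i * a i := by
        by_contra h0
        push_neg at h0
        have : ∑ i, c i * a i = 0 := Finset.sum_eq_zero fun i _ => by have := h0 i; omega
        omega
      obtain ⟨i, hi⟩ := hex
      have hci : 0 < c i := by
        rcases Nat.eq_zero_or_pos (c i) with h0 | h0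
        · rw [h0] at hi; simp at hi
        · exact h0
      have hai : 0 < a i := by
        rcases Nat.eq_zero_or_pos (a i) with h0 | h0
        · rw [h0] at hi; simp at hi
        · exact h0
      have hasup : a i ≤ Finset.univ.sup a := Finset.le_sup (Finset.mem_univ i)
      have hkeyc := update_sum_key a c i (c i - 1)
      have hcc : (c i - 1) * a i + a i = c i * a i := by
        have h2 : (c i - 1) + 1 = c i := by omega
        calc (c i - 1) * a i + a i = ((c i - 1) + 1) * a i := by ring
          _ = c i * a i := by rw [h2]
      have hlt : n - a i < n := by omega
      have hF' : F ≤ n - a i := by omega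
      have hub' : n - a i ≤ F + ∑ j, Function.update c i (c i - 1) j * a j := by
        omega
      obtain ⟨k', m, hk'le, hrep, hmF, hmU⟩ :=
        ih (n - a i) hlt (Function.update c i (c i - 1)) hF' hub'
      refine ⟨Function.update k' i (k' i + 1), m, ?_, ?_, hmF, hmU⟩
      · intro j
        rcases eq_or_ne j i with rfl | hne
        · rw [Function.update_self]
          have := hk'le j
          rw [Function.update_self] at this
          omega
        · rw [Function.update_of_ne hne]
          have := hk'le j
          rw [Function.update_of_ne hne] at this
          exact this
      · have hkeyk := update_sum_key a k' i (k' i + 1)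
        have hpo : (k' i + 1) * a i = k' i * a i + a i := by ring
        have han : a i ≤ n := by omega
        omega

lemma refl_nsmul {A : Finset ℕ} {a : ℕ} (ha : ∀ y ∈ A, y ≤ a) {n x : ℕ}
    (hx : x ∈ n • A) : ∃ y ∈ n • A.image (a - ·), x + y = n * a := by
  induction n generalizing x with
  | zero =>
      rw [zero_nsmul, Finset.mem_zero] at hx
      subst hx
      exact ⟨0, by rw [zero_nsmul, Finset.mem_zero], by simp⟩
  | succ m ih =>
      rw [succ_nsmul] at hx
      obtain ⟨u, hu, v, hv, rfl⟩ := Finset.mem_add.1 hx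
      obtain ⟨y, hy, hxy⟩ := ih hu
      refine ⟨y + (a - v), ?_, ?_⟩
      · rw [succ_nsmul]
        exact Finset.mem_add.2 ⟨y, hy, a - v, Finset.mem_image.2 ⟨v, hv, rfl⟩, rfl⟩
      · have hva := ha v hv
        have hsub : v + (a - v) = a := by omega
        calc u + v + (y + (a - v)) = (u + y) + (v + (a - v)) := by ring
          _ = m * a + a := by rw [hxy, hsub]
          _ = (m + 1) * a := by ring

/-- The filling lemma: all integers in the "middle range" belong to the sumset. -/
lemma filling {r : ℕ} (hr : 0 < r) (A : Fin r → Finset ℕ) (B : Finset ℕ) (a : Fin r → ℕ)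
    (h0A : ∀ i, 0 ∈ A i) (h0B : 0 ∈ B) (haA : ∀ i, a i ∈ A i)
    (hgcd : (Finset.univ.biUnion A).gcd id = 1) :
    ∃ K N : ℕ, 0 < K ∧ ∀ h : Fin r → ℕ, (∀ i, N ≤ h i) → ∀ n, K ≤ n →
      n + K ≤ ∑ i, a i * h i → n ∈ B + ∑ i, h i • A i := by
  classical
  have : Nonempty (Fin r) := ⟨⟨0, hr⟩⟩
  set G : Finset ℕ := Finset.univ.biUnion A with hG
  set G₀ : Finset ℕ := G.filter (fun x => 0 < x) with hG₀
  have hpos : ∀ x ∈ G₀, 0 < x := fun x hx => (Finset.mem_filter.1 hx).2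
  have hg0 : G₀.gcd id = 1 := by
    have hdvd : G₀.gcd id ∣ 1 := by
      rw [← hgcd]
      refine Finset.dvd_gcd fun x hx => ?_
      rcases Nat.eq_zero_or_pos x with rfl | hxpos
      · exact dvd_zero _
      · exact Finset.gcd_dvd (Finset.mem_filter.2 ⟨hx, hxpos⟩)
    exact Nat.dvd_one.1 hdvd
  obtain ⟨F, hFpos, hFrep⟩ := frobenius G₀ hpos hg0
  set amax : ℕ := Finset.univ.sup a with hamax
  set C : ℕ := F + amax with hC
  refine ⟨F + C * (∑ i, a i) + 1, C, by positivity, fun h hN n hnK hnU => ?_⟩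
  -- capacity identity
  have hcap : ∑ i, (h i - C) * a i + C * (∑ i, a i) = ∑ i, a i * h i := by
    rw [Finset.mul_sum, ← Finset.sum_add_distrib]
    refine Finset.sum_congr rfl fun i _ => ?_
    have h1 : h i - C + C = h i := by have := hN i; omega
    calc (h i - C) * a i + C * a i = ((h i - C) + C) * a i := by ring
      _ = a i * h i := by rw [h1]; ring
  have hbeta : ∑ i, (fun i => h i - C) i * a i = ∑ i, (h i - C) * a i := rfl
  obtain ⟨k, m, hkle, hrep, hmF, hmU⟩ := greedy a F n (fun i => h i - C)
    (by omega) (by omega)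
  obtain ⟨d, hdsum, hdcard⟩ := hFrep m hmF
  -- assignment of generators to coordinates
  have hι : ∀ x ∈ G₀, ∃ i : Fin r, x ∈ A i := by
    intro x hx
    have hxG : x ∈ G := (Finset.mem_filter.1 hx).1
    obtain ⟨i, -, hi⟩ := Finset.mem_biUnion.1 hxG
    exact ⟨i, hi⟩
  set ι : ℕ → Fin r := fun x => if hx : ∃ i : Fin r, x ∈ A i then hx.choose else ⟨0, hr⟩ with hιdef
  have hιspec : ∀ x ∈ G₀, x ∈ A (ι x) := by
    intro x hx
    obtain ⟨i, hi⟩ := hι x hx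
    have hex : ∃ i : Fin r, x ∈ A i := ⟨i, hi⟩
    simp only [hιdef, dif_pos hex]
    exact hex.choose_spec
  set w : Fin r → ℕ := fun i => k i * a i + ∑ x ∈ G₀.filter (fun x => ι x = i), d x * x
    with hw
  have hwmem : ∀ i, w i ∈ h i • A i := by
    intro i
    have h1 : k i * a i ∈ k i • A i := mul_mem_nsmul (haA i) (k i)
    have h2 : (∑ x ∈ G₀.filter (fun x => ι x = i), d x * x)
        ∈ (∑ x ∈ G₀.filter (fun x => ι x = i), d x) • A i := by
      refine sum_mem_sum_nsmul _ _ _ fun x hx => ?_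
      have hx1 := Finset.mem_filter.1 hx
      have hxA := hιspec x hx1.1
      rw [hx1.2] at hxA
      exact mul_mem_nsmul hxA (d x)
    have h3 : w i ∈ (k i + ∑ x ∈ G₀.filter (fun x => ι x = i), d x) • A i := by
      rw [add_nsmul]
      exact Finset.mem_add.2 ⟨_, h1, _, h2, rfl⟩
    refine nsmul_subset_nsmul (h0A i) ?_ h3
    have h4 : ∑ x ∈ G₀.filter (fun x => ι x = i), d x ≤ ∑ x ∈ G₀, d x :=
      Finset.sum_le_sum_of_subset (Finset.filter_subset _ _)
    have h5 := hkle i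
    have h6 := hN i
    omega
  have hwsum : ∑ i, w i = n := by
    rw [hw]
    simp only
    rw [Finset.sum_add_distrib]
    have h1 : ∑ i, ∑ x ∈ G₀.filter (fun x => ι x = i), d x * x = ∑ x ∈ G₀, d x * x := by
      exact Finset.sum_fiberwise_of_maps_to (fun x _ => Finset.mem_univ (ι x)) _
    rw [h1, hdsum]
    omega
  refine Finset.mem_add.2 ⟨0, h0B, ∑ i, w i, ?_, by omega⟩
  exact (mem_finsum _ _ _).2 ⟨w, fun i _ => hwmem i, rfl⟩

/-- Stabilization of the low part of the sumset. -/
lemma low_stable {r : ℕ} (A : Fin r → Finset ℕ) (B : Finset ℕ)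
    (h0A : ∀ i, 0 ∈ A i) (K : ℕ) :
    ∃ α N : ℕ, ∀ h : Fin r → ℕ, (∀ i, N ≤ h i) →
      ((B + ∑ i, h i • A i) ∩ Finset.range K).card = α := by
  classical
  set L : ℕ → Finset ℕ := fun t => (B + ∑ i, t • A i) ∩ Finset.range K with hL
  have hmono : ∀ (g g' : Fin r → ℕ), (∀ i, g i ≤ g' i) →
      (B + ∑ i, g i • A i) ⊆ (B + ∑ i, g' i • A i) := by
    intro g g' hgg
    exact Finset.add_subset_add_left
      (sum_subset_sum _ _ _ fun i _ => nsmul_subset_nsmul (h0A i) (hgg i))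
  have hLmono : ∀ {s t : ℕ}, s ≤ t → L s ⊆ L t := by
    intro s t hst
    exact Finset.inter_subset_inter (hmono _ _ fun _ => hst) (Finset.Subset.refl _)
  have hbdd : BddAbove (Set.range fun t => (L t).card) := by
    refine ⟨K, ?_⟩
    rintro x ⟨t, rfl⟩
    calc (L t).card ≤ (Finset.range K).card :=
          Finset.card_le_card (Finset.inter_subset_right)
      _ = K := Finset.card_range K
  have hne : (Set.range fun t => (L t).card).Nonempty := ⟨(L 0).card, 0, rfl⟩
  have hmem := Nat.sSup_mem hne hbdd
  obtain ⟨t₀, ht₀⟩ := hmem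
  refine ⟨(L t₀).card, t₀, fun h hN => ?_⟩
  set T : ℕ := Finset.univ.sup h ⊔ t₀ with hT
  have h1 : L t₀ ⊆ (B + ∑ i, h i • A i) ∩ Finset.range K :=
    Finset.inter_subset_inter (hmono _ _ fun i => hN i) (Finset.Subset.refl _)
  have h2 : (B + ∑ i, h i • A i) ∩ Finset.range K ⊆ L T := by
    refine Finset.inter_subset_inter (hmono _ _ fun i => ?_) (Finset.Subset.refl _)
    exact le_sup_of_le_left (Finset.le_sup (Finset.mem_univ i))
  have h3 : L t₀ ⊆ L T := hLmono le_sup_right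
  have h4 : (L T).card ≤ (L t₀).card := by
    have ht₀' : (L t₀).card = sSup (Set.range fun t => (L t).card) := ht₀
    rw [ht₀']
    exact le_csSup hbdd ⟨T, rfl⟩
  have h5 : L t₀ = L T := Finset.eq_of_subset_of_card_le h3 h4
  have h6 : (B + ∑ i, h i • A i) ∩ Finset.range K = L t₀ :=
    Finset.Subset.antisymm (h5 ▸ h2) h1
  rw [h6]

lemma S_le {r : ℕ} {A : Fin r → Finset ℕ} {B : Finset ℕ} {a : Fin r → ℕ} {b : ℕ}
    (hale : ∀ i, ∀ y ∈ A i, y ≤ a i) (hble : ∀ y ∈ B, y ≤ b) (h : Fin r → ℕ) {x : ℕ}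
    (hx : x ∈ B + ∑ i, h i • A i) : x ≤ ∑ i, a i * h i + b := by
  obtain ⟨xb, hxb, z, hz, rfl⟩ := Finset.mem_add.1 hx
  obtain ⟨u, hu, rfl⟩ := (mem_finsum _ _ _).1 hz
  have h1 : ∀ i, u i ≤ a i * h i := fun i => by
    have h0 := mem_nsmul_le (hu i (Finset.mem_univ i)) (hale i)
    have h1 : h i * a i = a i * h i := mul_comm _ _
    omega
  have h2 : ∑ i, u i ≤ ∑ i, a i * h i := Finset.sum_le_sum fun i _ => h1 i
  have h3 : xb ≤ b := hble xb hxb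
  omega

lemma refl_S {r : ℕ} {A : Fin r → Finset ℕ} {B : Finset ℕ} {a : Fin r → ℕ} {b : ℕ}
    (hale : ∀ i, ∀ y ∈ A i, y ≤ a i) (hble : ∀ y ∈ B, y ≤ b) (h : Fin r → ℕ) {x : ℕ}
    (hx : x ∈ B + ∑ i, h i • A i) :
    ∃ y ∈ B.image (b - ·) + ∑ i, h i • (A i).image (a i - ·),
      x + y = ∑ i, a i * h i + b := by
  obtain ⟨xb, hxb, z, hz, rfl⟩ := Finset.mem_add.1 hx
  obtain ⟨u, hu, rfl⟩ := (mem_finsum _ _ _).1 hz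
  choose y hy hxy using fun i => refl_nsmul (hale i) (hu i (Finset.mem_univ i))
  refine ⟨(b - xb) + ∑ i, y i, Finset.mem_add.2 ⟨b - xb,
    Finset.mem_image.2 ⟨xb, hxb, rfl⟩, ∑ i, y i,
    (mem_finsum _ _ _).2 ⟨y, fun i _ => hy i, rfl⟩, rfl⟩, ?_⟩
  have h1 : ∑ i, (u i + y i) = ∑ i, h i * a i := Finset.sum_congr rfl (fun i _ => hxy i)
  have h2 : xb ≤ b := hble xb hxb
  have h3 : ∑ i, h i * a i = ∑ i, a i * h i := Finset.sum_congr rfl fun i _ => mul_comm _ _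
  rw [Finset.sum_add_distrib] at h1
  omega

end HKNAux

/-- **Han–Kirfel–Nathanson: eventual multilinearity of the growth function.**
Let `A₁, …, A_r, B` be finite nonempty subsets of `ℕ` with `0 ∈ B ∩ A₁ ∩ ⋯ ∩ A_r` and
`gcd(A₁ ∪ ⋯ ∪ A_r) = 1`, and let `b* = max B`, `aᵢ* = max Aᵢ`.  Then there is an integer `Δ`
with `|B + h₁A₁ + ⋯ + h_rA_r| = a₁*h₁ + ⋯ + a_r*h_r + b* + 1 − Δ` for all sufficiently
large `min(h₁, …, h_r)`. -/
theorem growth_function_eventually_multilinear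
    (r : ℕ) (hr : 0 < r) (A : Fin r → Finset ℕ) (B : Finset ℕ)
    (h0A : ∀ i, 0 ∈ A i) (h0B : 0 ∈ B)
    (hgcd : (Finset.univ.biUnion A).gcd id = 1) :
    ∃ Δ : ℤ, ∃ N : ℕ, ∀ h : Fin r → ℕ, (∀ i, N < h i) →
      ((B + ∑ i, h i • A i).card : ℤ) =
        ∑ i, ((A i).max' ⟨0, h0A i⟩ : ℤ) * (h i : ℤ) + (B.max' ⟨0, h0B⟩ : ℤ) + 1 - Δ := by
  classical
  open Finset HKNAux in
  set a : Fin r → ℕ := fun i => (A i).max' ⟨0, h0A i⟩ with ha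
  set b : ℕ := B.max' ⟨0, h0B⟩ with hb
  have haA : ∀ i, a i ∈ A i := fun i => (A i).max'_mem _
  have hale : ∀ i, ∀ y ∈ A i, y ≤ a i := fun i y hy => Finset.le_max' _ _ hy
  have hbB : b ∈ B := B.max'_mem _
  have hble : ∀ y ∈ B, y ≤ b := fun y hy => Finset.le_max' _ _ hy
  set A' : Fin r → Finset ℕ := fun i => (A i).image (a i - ·) with hA'
  set B' : Finset ℕ := B.image (b - ·) with hB'
  have h0A' : ∀ i, 0 ∈ A' i := fun i =>
    Finset.mem_image.2 ⟨a i, haA i, by omega⟩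
  have h0B' : 0 ∈ B' := Finset.mem_image.2 ⟨b, hbB, by omega⟩
  have haA' : ∀ i, a i ∈ A' i := fun i =>
    Finset.mem_image.2 ⟨0, h0A i, by omega⟩
  have hale' : ∀ i, ∀ y ∈ A' i, y ≤ a i := by
    intro i y hy
    obtain ⟨x, -, rfl⟩ := Finset.mem_image.1 hy
    omega
  have hble' : ∀ y ∈ B', y ≤ b := by
    intro y hy
    obtain ⟨x, -, rfl⟩ := Finset.mem_image.1 hy
    omega
  have hgcd' : (Finset.univ.biUnion A').gcd id = 1 := by
    refine Nat.dvd_one.1 ?_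
    rw [← hgcd]
    refine Finset.dvd_gcd fun x hx => ?_
    obtain ⟨i, -, hxi⟩ := Finset.mem_biUnion.1 hx
    have hd1 : (Finset.univ.biUnion A').gcd id ∣ a i :=
      Finset.gcd_dvd (Finset.mem_biUnion.2 ⟨i, Finset.mem_univ i, haA' i⟩)
    have hd2 : (Finset.univ.biUnion A').gcd id ∣ a i - x :=
      Finset.gcd_dvd (Finset.mem_biUnion.2 ⟨i, Finset.mem_univ i,
        Finset.mem_image.2 ⟨x, hxi, rfl⟩⟩)
    have hxle : x ≤ a i := hale i x hxi
    have : x = a i - (a i - x) := by omega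
    rw [this]
    exact Nat.dvd_sub hd1 hd2
  -- reflecting twice gives back the original sets
  have hApp : ∀ i, (A' i).image (a i - ·) = A i := by
    intro i
    rw [hA']
    simp only
    rw [Finset.image_image]
    have h1 : ∀ x ∈ A i, ((a i - ·) ∘ (a i - ·)) x = id x := by
      intro x hx
      have := hale i x hx
      simp only [Function.comp_apply, id_eq]
      omega
    rw [Finset.image_congr h1, Finset.image_id]
  have hBpp : B'.image (b - ·) = B := by
    rw [hB', Finset.image_image]
    have h1 : ∀ x ∈ B, ((b - ·) ∘ (b - ·)) x = id x := by
      intro x hx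
      have := hble x hx
      simp only [Function.comp_apply, id_eq]
      omega
    rw [Finset.image_congr h1, Finset.image_id]
  -- the two filling lemmas and the two stabilization lemmas
  obtain ⟨K₁, N₁, hK₁pos, hfill⟩ := filling hr A B a h0A h0B haA hgcd
  obtain ⟨K₂, N₂, hK₂pos, hfill'⟩ := filling hr A' B' a h0A' h0B' haA' hgcd'
  set K : ℕ := K₁ + K₂ + b + 1 with hK
  obtain ⟨α, N₃, hlow⟩ := low_stable A B h0A K
  obtain ⟨β, N₄, hlow'⟩ := low_stable A' B' h0A' K
  -- some i₀ with a i₀ positive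
  have hex : ∃ i, 0 < a i := by
    by_contra h0
    push_neg at h0
    have hz : ∀ x ∈ Finset.univ.biUnion A, (id x : ℕ) = 0 := by
      intro x hx
      obtain ⟨i, -, hxi⟩ := Finset.mem_biUnion.1 hx
      have h1 := hale i x hxi
      have h2 := h0 i
      simp only [id_eq]
      omega
    rw [Finset.gcd_eq_zero_iff.2 hz] at hgcd
    exact absurd hgcd (by norm_num)
  obtain ⟨i₀, hi₀⟩ := hex
  set N : ℕ := N₁ + N₂ + N₃ + N₄ + 2 * K with hN
  refine ⟨(2 * K : ℤ) - α - β, N, fun h hh => ?_⟩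
  set M : ℕ := ∑ i, a i * h i + b with hM
  set S : Finset ℕ := B + ∑ i, h i • A i with hS
  set S' : Finset ℕ := B' + ∑ i, h i • A' i with hS'
  have hhN : ∀ i, N < h i := hh
  have hM2K : 2 * K + 1 ≤ M := by
    have h1 : a i₀ * h i₀ ≤ ∑ i, a i * h i :=
      Finset.single_le_sum (f := fun i => a i * h i) (fun i _ => Nat.zero_le _)
        (Finset.mem_univ i₀)
    have h2 := hhN i₀
    have h3 : h i₀ ≤ a i₀ * h i₀ := Nat.le_mul_of_pos_left _ hi₀
    omega
  -- membership characterization via reflection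
  have hSle : ∀ x ∈ S, x ≤ M := fun x hx => S_le hale hble h hx
  have hchar : ∀ x, x ≤ M → (x ∈ S ↔ M - x ∈ S') := by
    intro x hxM
    constructor
    · intro hx
      obtain ⟨y, hy, hxy⟩ := refl_S hale hble h hx
      have : y = M - x := by omega
      rwa [← this]
    · intro hx
      obtain ⟨y, hy, hxy⟩ := refl_S hale' hble' h hx
      have hyS : y ∈ S := by
        rw [hS]
        have he : B'.image (b - ·) + ∑ i, h i • (A' i).image (a i - ·)
            = B + ∑ i, h i • A i := by
          rw [hBpp]
          congr 1
          exact Finset.sum_congr rfl fun i _ => by rw [hApp i]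
        rwa [he] at hy
      have : y = x := by omega
      rwa [← this]
  -- decomposition of the complement
  set T : Finset ℕ := Finset.range (M + 1) \ S with hT
  have hTeq : T = (Finset.range K \ S) ∪ (Finset.range K \ S').image (M - ·) := by
    ext x
    simp only [hT, Finset.mem_sdiff, Finset.mem_union, Finset.mem_range, Finset.mem_image]
    constructor
    · rintro ⟨hx1, hx2⟩
      rcases lt_or_ge x K with hxK | hxK
      · exact Or.inl ⟨hxK, hx2⟩
      · rcases le_or_gt (x + K) M with hxm | hxm
        · exfalso
          refine hx2 (hfill h (fun i => by have := hhN i; omega) x (by omega) ?_)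
          omega
        · refine Or.inr ⟨M - x, ⟨by omega, ?_⟩, by omega⟩
          intro hc
          exact hx2 ((hchar x (by omega)).2 hc)
    · rintro (⟨hx1, hx2⟩ | ⟨y, ⟨hy1, hy2⟩, rfl⟩)
      · exact ⟨by omega, hx2⟩
      · refine ⟨by omega, fun hc => ?_⟩
        have h1 : M - (M - y) = y := by omega
        exact hy2 (h1 ▸ (hchar (M - y) (by omega)).1 hc)
  have hdisj : Disjoint (Finset.range K \ S) ((Finset.range K \ S').image (M - ·)) := by
    rw [Finset.disjoint_left]
    intro x hx1 hx2
    obtain ⟨y, hy, hyx⟩ := Finset.mem_image.1 hx2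
    have h1 : y < K := Finset.mem_range.1 (Finset.mem_sdiff.1 hy).1
    have h2 : x < K := Finset.mem_range.1 (Finset.mem_sdiff.1 hx1).1
    omega
  have hcard1 : T.card = (Finset.range K \ S).card + (Finset.range K \ S').card := by
    rw [hTeq, Finset.card_union_of_disjoint hdisj, Finset.card_image_of_injOn]
    intro y1 hy1 y2 hy2 he
    have h1 := Finset.mem_range.1 (Finset.mem_sdiff.1 hy1).1
    have h2 := Finset.mem_range.1 (Finset.mem_sdiff.1 hy2).1
    have he2 : M - y1 = M - y2 := he
    omega
  have hlowS : (S ∩ Finset.range K).card = α :=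
    hlow h (fun i => by have := hhN i; omega)
  have hlowS' : (S' ∩ Finset.range K).card = β :=
    hlow' h (fun i => by have := hhN i; omega)
  have hsd : (Finset.range K \ S).card = K - α := by
    have he : Finset.range K \ S = Finset.range K \ (S ∩ Finset.range K) := by
      ext x
      simp only [Finset.mem_sdiff, Finset.mem_inter]
      tauto
    rw [he, Finset.card_sdiff_of_subset Finset.inter_subset_right, hlowS, Finset.card_range]
  have hsd' : (Finset.range K \ S').card = K - β := by
    have he : Finset.range K \ S' = Finset.range K \ (S' ∩ Finset.range K) := by
      ext x
      simp only [Finset.mem_sdiff, Finset.mem_inter]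
      tauto
    rw [he, Finset.card_sdiff_of_subset Finset.inter_subset_right, hlowS', Finset.card_range]
  have hαK : α ≤ K := by
    rw [← hlowS]
    calc (S ∩ Finset.range K).card ≤ (Finset.range K).card :=
          Finset.card_le_card Finset.inter_subset_right
      _ = K := Finset.card_range K
  have hβK : β ≤ K := by
    rw [← hlowS']
    calc (S' ∩ Finset.range K).card ≤ (Finset.range K).card :=
          Finset.card_le_card Finset.inter_subset_right
      _ = K := Finset.card_range K
  have hsub : S ⊆ Finset.range (M + 1) := fun x hx =>
    Finset.mem_range.2 (by have := hSle x hx; omega)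
  have hcardT : T.card = (M + 1) - S.card := by
    rw [hT, Finset.card_sdiff_of_subset hsub, Finset.card_range]
  have hcardS_le : S.card ≤ M + 1 := by
    calc S.card ≤ (Finset.range (M + 1)).card := Finset.card_le_card hsub
      _ = M + 1 := Finset.card_range _
  have hMcast : ((M : ℕ) : ℤ) = ∑ i, (a i : ℤ) * (h i : ℤ) + (b : ℤ) := by
    rw [hM]
    push_cast
    ring
  have hfin : (S.card : ℤ) = (M : ℤ) + 1 - ((2 * K : ℤ) - α - β) := by omega
  rw [hfin, hMcast]
end

section
/- Let A and B be finite nonempty subsets of the nonnegative integers with 0 ∈ A ∩ B and gcd(A) = 1, and let a* = max(A) and b* = max(B). Then there exist nonnegative integers c and d and finite sets C ⊆ [0, c−2] and D ⊆ [0, d−2] such that for all sufficiently large h, the sumset B + hA equals C ∪ [c, b* + a*h − d] ∪ (b* + a*h − D), where b* + a*h − D denotes {b* + a*h − x : x ∈ D} and [c, m] denotes the set of integers n with c ≤ n ≤ m. In particular, |B + hA| = a*h + b* + 1 − Δ for some fixed integer Δ and all sufficiently large h. -/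
open Pointwise


def NRep (A : Finset ℕ) (n : ℕ) : Prop := ∃ h : ℕ, n ∈ h • A

lemma nrep_add {A : Finset ℕ} {m n : ℕ} (hm : NRep A m) (hn : NRep A n) : NRep A (m + n) := by
  obtain ⟨h1, hm⟩ := hm; obtain ⟨h2, hn⟩ := hn
  exact ⟨h1 + h2, by rw [add_nsmul]; exact Finset.add_mem_add hm hn⟩

lemma nrep_zero (A : Finset ℕ) : NRep A 0 := ⟨0, by simp [Finset.mem_zero]⟩

lemma nrep_of_mem {A : Finset ℕ} {a : ℕ} (ha : a ∈ A) : NRep A a := ⟨1, by simpa using ha⟩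

lemma nrep_mul {A : Finset ℕ} {a : ℕ} (ha : NRep A a) (k : ℕ) : NRep A (k * a) := by
  induction k with
  | zero => simpa using nrep_zero A
  | succ m ih =>
    have := nrep_add ih ha
    rwa [show (m+1) * a = m * a + a by ring]

lemma exists_consec (A : Finset ℕ) (hgcd : A.gcd id = 1) : ∃ t, NRep A t ∧ NRep A (t + 1) := by
  set G : AddSubgroup ℤ := AddSubgroup.closure ((↑) '' (A : Set ℕ)) with hG
  obtain ⟨g, hg⟩ := Int.subgroup_cyclic G
  have hdvd : ∀ a ∈ A, g ∣ (a : ℤ) := by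
    intro a ha
    have : (a : ℤ) ∈ G := AddSubgroup.subset_closure ⟨a, ha, rfl⟩
    rw [hg, AddSubgroup.mem_closure_singleton] at this
    obtain ⟨n, hn⟩ := this
    exact ⟨n, by rw [← hn, zsmul_eq_mul, mul_comm]; simp⟩
  have hdvd' : g.natAbs ∣ A.gcd id := by
    apply Finset.dvd_gcd
    intro a ha
    have := Int.natAbs_dvd_natAbs.mpr (hdvd a ha)
    simpa using this
  rw [hgcd, Nat.dvd_one] at hdvd'
  have hgG : g ∈ G := by rw [hg]; exact AddSubgroup.subset_closure rfl
  have hone : (1 : ℤ) ∈ G := by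
    rcases Int.natAbs_eq_iff.mp hdvd' with h | h <;> push_cast at h
    · rwa [← h]
    · have := AddSubgroup.neg_mem G hgG
      rw [h] at this; simpa using this
  have key : ∀ z ∈ G, ∃ s t : ℕ, NRep A s ∧ NRep A t ∧ (z = (s : ℤ) - t) := by
    intro z hz
    induction hz using AddSubgroup.closure_induction with
    | mem x hx =>
      obtain ⟨a, ha, rfl⟩ := hx
      exact ⟨a, 0, nrep_of_mem ha, nrep_zero A, by simp⟩
    | zero => exact ⟨0, 0, nrep_zero A, nrep_zero A, by simp⟩
    | add x y _ _ ihx ihy =>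
      obtain ⟨s1, t1, hs1, ht1, rfl⟩ := ihx
      obtain ⟨s2, t2, hs2, ht2, rfl⟩ := ihy
      exact ⟨s1 + s2, t1 + t2, nrep_add hs1 hs2, nrep_add ht1 ht2, by push_cast; ring⟩
    | neg x _ ihx =>
      obtain ⟨s, t, hs, ht, rfl⟩ := ihx
      exact ⟨t, s, ht, hs, by ring⟩
  obtain ⟨s, t, hs, ht, hst⟩ := key 1 hone
  have : s = t + 1 := by omega
  exact ⟨t, ht, this ▸ hs⟩

lemma exists_frobenius (A : Finset ℕ) (hgcd : A.gcd id = 1) : ∃ F, ∀ n, F ≤ n → NRep A n := by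
  obtain ⟨t, ht, ht1⟩ := exists_consec A hgcd
  rcases Nat.eq_zero_or_pos t with rfl | htpos
  · refine ⟨0, fun n _ => ?_⟩
    simpa using nrep_mul ht1 n
  · refine ⟨t * t, fun n hn => ?_⟩
    have hr : n % t < t := Nat.mod_lt _ htpos
    have hq : t ≤ n / t := by
      have := Nat.div_le_div_right (c := t) hn
      rwa [Nat.mul_div_cancel_left t htpos] at this
    have hd : n = (n / t - n % t) * t + (n % t) * (t + 1) := by
      have h1 : n = t * (n / t) + n % t := (Nat.div_add_mod n t).symm
      have h2 : n % t ≤ n / t := le_trans (le_of_lt hr) hq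
      zify [h2] at *
      nlinarith [h1]
    rw [hd]
    exact nrep_add (nrep_mul ht _) (nrep_mul ht1 _)

-- P n := ∃ h, n ∈ h • A, basic facts
section
variable (A : Finset ℕ) (h0A : 0 ∈ A)

lemma mem_nsmul_mono {A : Finset ℕ} (h0A : 0 ∈ A) {n h h' : ℕ} (hh : h ≤ h') (hn : n ∈ h • A) :
    n ∈ h' • A := by
  induction h' with
  | zero => simpa [Nat.le_zero.mp hh] using hn
  | succ k ih =>
    rcases Nat.lt_or_ge h (k+1) with hl | hg
    · have : n ∈ k • A := ih (Nat.lt_succ_iff.mp hl)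
      have : (0 : ℕ) + n ∈ A + k • A := Finset.add_mem_add h0A this
      rw [succ_nsmul, add_comm]
      simpa using this
    · have : h = k + 1 := le_antisymm hh hg
      simpa [this] using hn

lemma zero_mem_nsmul {A : Finset ℕ} (h0A : 0 ∈ A) (h : ℕ) : (0 : ℕ) ∈ h • A := by
  induction h with
  | zero => simp [Finset.mem_zero]
  | succ k ih =>
    have := Finset.add_mem_add h0A ih
    rw [succ_nsmul, add_comm]; simpa using this

lemma nsmul_le {A : Finset ℕ} (hA : A.Nonempty) {n h : ℕ} (hn : n ∈ h • A) :
    n ≤ h * A.max' hA := by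
  induction h generalizing n with
  | zero => simp_all [Finset.mem_zero]
  | succ k ih =>
    rw [succ_nsmul, add_comm] at hn
    rw [Finset.mem_add] at hn
    obtain ⟨a, ha, m, hm, rfl⟩ := hn
    have := ih hm
    have := A.le_max' a ha
    nlinarith

lemma mul_max_mem_nsmul {A : Finset ℕ} {a : ℕ} (ha : a ∈ A) (h : ℕ) : h * a ∈ h • A := by
  induction h with
  | zero => simp [Finset.mem_zero]
  | succ k ih =>
    rw [succ_nsmul]
    have := Finset.add_mem_add ih ha
    simpa [Nat.succ_mul] using this

end

lemma middle_full (A : Finset ℕ) (h0A : 0 ∈ A) (hgcd : A.gcd id = 1) :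
    ∃ K M : ℕ, 0 < K ∧ ∀ h n : ℕ, M ≤ h → K ≤ n → n + K ≤ A.max' ⟨0, h0A⟩ * h → n ∈ h • A := by
  classical
  set a := A.max' ⟨0, h0A⟩ with ha
  have hamem : a ∈ A := A.max'_mem _
  have hapos : 0 < a := by
    rcases Nat.eq_zero_or_pos a with h0 | h
    · exfalso
      have : A = {0} := by
        apply Finset.eq_singleton_iff_unique_mem.mpr
        refine ⟨h0A, fun x hx => ?_⟩
        have := A.le_max' x hx
        omega
      rw [this] at hgcd
      simp at hgcd
    · exact h
  obtain ⟨F, hF⟩ := exists_frobenius A hgcd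
  choose g hg using fun r : ℕ => hF (F + r) (by omega)
  set M := (Finset.range a).sup g with hM
  refine ⟨F + a * M + 1, M, by omega, fun h n hh hn hna => ?_⟩
  obtain ⟨m, hm⟩ : ∃ m, n = F + m := ⟨n - F, by omega⟩
  subst hm
  set r := m % a with hr
  set q := m / a with hq
  have hrq : m = a * q + r := (Nat.div_add_mod m a).symm
  have hra : r < a := Nat.mod_lt _ hapos
  have h1 : F + r ∈ M • A :=
    mem_nsmul_mono h0A (Finset.le_sup (f := g) (Finset.mem_range.mpr hra)) (hg r)
  have h2 : a * q ∈ q • A := by rw [mul_comm]; exact mul_max_mem_nsmul hamem q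
  have hqh : M + q ≤ h := by
    have hqa : a * q ≤ m := by omega
    by_contra hc
    push_neg at hc
    have hc' : h + 1 ≤ M + q := hc
    nlinarith
  have hmem : (F + r) + a * q ∈ (M + q) • A := by
    rw [add_nsmul]; exact Finset.add_mem_add h1 h2
  have hn' : F + m = (F + r) + a * q := by omega
  rw [hn']
  exact mem_nsmul_mono h0A hqh hmem

lemma stabilize (s : ℕ → Finset ℕ) (K : ℕ) (hmono : ∀ h h', h ≤ h' → s h ⊆ s h')
    (hbd : ∀ h, s h ⊆ Finset.range K) : ∃ N L, ∀ h, N ≤ h → s h = L := by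
  classical
  set L := (Finset.range K).filter (fun x => ∃ h, x ∈ s h) with hL
  set f : ℕ → ℕ := fun x => if hx : ∃ h, x ∈ s h then Nat.find hx else 0 with hf
  refine ⟨L.sup f, L, fun h hh => ?_⟩
  ext x
  constructor
  · intro hx
    exact Finset.mem_filter.mpr ⟨hbd h hx, h, hx⟩
  · intro hx
    have hex : ∃ h, x ∈ s h := (Finset.mem_filter.mp hx).2
    have h1 : x ∈ s (Nat.find hex) := Nat.find_spec hex
    have h2 : f x ≤ L.sup f := Finset.le_sup hx
    have h3 : f x = Nat.find hex := by simp [hf, hex]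
    exact hmono _ _ (by omega) h1

lemma max'_pos (A : Finset ℕ) (h0A : 0 ∈ A) (hgcd : A.gcd id = 1) :
    0 < A.max' ⟨0, h0A⟩ := by
  rcases Nat.eq_zero_or_pos (A.max' ⟨0, h0A⟩) with h0 | h
  · exfalso
    have : A = {0} := by
      apply Finset.eq_singleton_iff_unique_mem.mpr
      refine ⟨h0A, fun x hx => ?_⟩
      have := A.le_max' x hx
      omega
    rw [this] at hgcd
    simp at hgcd
  · exact h

/-- **Structure theorem for `B + hA` in `ℕ` (case `r = 1`).**
Let `A, B` be finite nonempty subsets of `ℕ` with `0 ∈ A ∩ B` and `gcd(A) = 1`, and put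
`a* = max A`, `b* = max B`.  Then there are `c, d ∈ ℕ` and finite sets `C ⊆ [0, c−2]`,
`D ⊆ [0, d−2]` with `B + hA = C ∪ [c, b* + a*h − d] ∪ (b* + a*h − D)` for all sufficiently
large `h`; in particular `|B + hA| = a*h + b* + 1 − Δ` for some fixed integer `Δ` and all
sufficiently large `h`. -/
theorem structure_of_sumset_B_add_hA
    (A B : Finset ℕ) (h0A : 0 ∈ A) (h0B : 0 ∈ B) (hgcd : A.gcd id = 1) :
    (∃ c d : ℕ, ∃ C D : Finset ℕ,
      (∀ x ∈ C, x + 2 ≤ c) ∧ (∀ x ∈ D, x + 2 ≤ d) ∧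
      ∃ N : ℕ, ∀ h : ℕ, N < h →
        B + h • A =
          C ∪ Finset.Icc c (B.max' ⟨0, h0B⟩ + A.max' ⟨0, h0A⟩ * h - d) ∪
            D.image (fun x => B.max' ⟨0, h0B⟩ + A.max' ⟨0, h0A⟩ * h - x)) ∧
    ∃ Δ : ℤ, ∃ N : ℕ, ∀ h : ℕ, N < h →
      ((B + h • A).card : ℤ) =
        (A.max' ⟨0, h0A⟩ : ℤ) * (h : ℤ) + (B.max' ⟨0, h0B⟩ : ℤ) + 1 - Δ := by
  classical
  obtain ⟨K₀, M₀, hK₀pos, hmid₀⟩ := middle_full A h0A hgcd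
  have hapos := max'_pos A h0A hgcd
  set a := A.max' ⟨0, h0A⟩ with haa
  set b := B.max' ⟨0, h0B⟩ with hbb
  have hamem : a ∈ A := A.max'_mem _
  have hbmem : b ∈ B := B.max'_mem _
  set K := K₀ + b + 1 with hK
  -- upper bound for elements of B + h • A
  have hub : ∀ h n : ℕ, n ∈ B + h • A → n ≤ b + a * h := by
    intro h n hn
    rw [Finset.mem_add] at hn
    obtain ⟨x, hx, y, hy, rfl⟩ := hn
    have h1 := B.le_max' x hx
    have h2 : y ≤ h * a := nsmul_le ⟨0, h0A⟩ hy
    rw [mul_comm] at h2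
    omega
  -- the middle interval is contained in B + h • A
  have hmid : ∀ h n : ℕ, M₀ ≤ h → K ≤ n → n + K ≤ b + a * h → n ∈ B + h • A := by
    intro h n hh hn hna
    have h1 : n - b ∈ h • A := hmid₀ h (n - b) hh (by omega) (by omega)
    have h2 : b + (n - b) ∈ B + h • A := Finset.add_mem_add hbmem h1
    have h3 : b + (n - b) = n := by omega
    rwa [h3] at h2
  -- monotonicity
  have hmono : ∀ h h' : ℕ, h ≤ h' → B + h • A ⊆ B + h' • A := by
    intro h h' hh n hn
    rw [Finset.mem_add] at hn ⊢
    obtain ⟨x, hx, y, hy, rfl⟩ := hn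
    exact ⟨x, hx, y, mem_nsmul_mono h0A hh hy, rfl⟩
  -- shifting by a
  have hshift : ∀ h k n : ℕ, n ∈ B + h • A → n + a * k ∈ B + (h + k) • A := by
    intro h k
    induction k with
    | zero => intro n hn; simpa using hn
    | succ m ih =>
      intro n hn
      have h1 := ih n hn
      rw [Finset.mem_add] at h1
      obtain ⟨x, hx, y, hy, hxy⟩ := h1
      have h2 : y + a ∈ (h + m + 1) • A := by
        rw [succ_nsmul]; exact Finset.add_mem_add hy hamem
      have h3 := Finset.add_mem_add hx h2
      have hma : a * (m + 1) = a * m + a := by ring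
      have h4 : x + (y + a) = n + a * (m + 1) := by omega
      rw [h4] at h3
      rwa [show h + (m + 1) = h + m + 1 by omega]
  -- stabilize the low part
  obtain ⟨N₁, Cs, hCs⟩ := stabilize (fun h => (B + h • A).filter (· < K)) K
    (fun h h' hh => Finset.filter_subset_filter _ (hmono h h' hh))
    (fun h => by
      intro x hx
      rw [Finset.mem_filter] at hx
      exact Finset.mem_range.mpr hx.2)
  -- stabilize the top part
  obtain ⟨N₂, Ds, hDs⟩ := stabilize
    (fun h => (Finset.range K).filter
      (fun x => x ≤ b + a * h ∧ b + a * h - x ∈ B + h • A)) K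
    (by
      intro h h' hh x hx
      rw [Finset.mem_filter] at hx ⊢
      obtain ⟨hxK, hxT, hmem⟩ := hx
      obtain ⟨k, rfl⟩ : ∃ k, h' = h + k := ⟨h' - h, by omega⟩
      have hma : a * (h + k) = a * h + a * k := by ring
      refine ⟨hxK, by omega, ?_⟩
      have := hshift h k _ hmem
      have heq : b + a * h - x + a * k = b + a * (h + k) - x := by omega
      rwa [heq] at this)
    (fun h => Finset.filter_subset _ _)
  have hCsK : ∀ x ∈ Cs, x < K := by
    intro x hx
    rw [← hCs N₁ le_rfl, Finset.mem_filter] at hx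
    exact hx.2
  have hDsK : ∀ x ∈ Ds, x < K := by
    intro x hx
    rw [← hDs N₂ le_rfl, Finset.mem_filter] at hx
    exact Finset.mem_range.mp hx.1
  set N := M₀ + N₁ + N₂ + 2 * K + 2 with hN
  have hTge : ∀ h : ℕ, N < h → 2 * K + 2 ≤ b + a * h := by
    intro h hh
    have : 1 * h ≤ a * h := Nat.mul_le_mul_right h hapos
    omega
  -- the partition
  have hpart : ∀ h : ℕ, N < h →
      B + h • A = Cs ∪ Finset.Icc K (b + a * h - K) ∪ Ds.image (fun x => b + a * h - x) := by
    intro h hh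
    have hTh := hTge h hh
    have hCeq : (B + h • A).filter (· < K) = Cs := hCs h (by omega)
    have hDeq : (Finset.range K).filter
        (fun x => x ≤ b + a * h ∧ b + a * h - x ∈ B + h • A) = Ds := hDs h (by omega)
    ext n
    simp only [Finset.mem_union, Finset.mem_Icc, Finset.mem_image]
    constructor
    · intro hn
      have hnT := hub h n hn
      rcases lt_or_ge n K with h1 | h1
      · exact Or.inl (Or.inl (by rw [← hCeq]; exact Finset.mem_filter.mpr ⟨hn, h1⟩))
      rcases le_or_gt n (b + a * h - K) with h2 | h2
      · exact Or.inl (Or.inr ⟨h1, h2⟩)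
      · refine Or.inr ⟨b + a * h - n, ?_, by omega⟩
        rw [← hDeq]
        refine Finset.mem_filter.mpr ⟨Finset.mem_range.mpr (by omega), by omega, ?_⟩
        rwa [show b + a * h - (b + a * h - n) = n by omega]
    · rintro ((hn | hn) | ⟨x, hx, rfl⟩)
      · rw [← hCeq] at hn; exact (Finset.mem_filter.mp hn).1
      · exact hmid h n (by omega) hn.1 (by omega)
      · rw [← hDeq] at hx
        exact (Finset.mem_filter.mp hx).2.2
  -- define c and d
  have hcex : ∃ j, ∀ i, j ≤ i → i < K → i ∈ Cs :=
    ⟨K, fun i h1 h2 => absurd h2 (by omega)⟩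
  have hdex : ∃ j, ∀ i, j ≤ i → i < K → i ∈ Ds :=
    ⟨K, fun i h1 h2 => absurd h2 (by omega)⟩
  set c := Nat.find hcex with hcdef
  set d := Nat.find hdex with hddef
  have hc1 : ∀ i, c ≤ i → i < K → i ∈ Cs := Nat.find_spec hcex
  have hd1 : ∀ i, d ≤ i → i < K → i ∈ Ds := Nat.find_spec hdex
  have hcK : c ≤ K := Nat.find_le (fun i h1 h2 => absurd h2 (by omega))
  have hdK : d ≤ K := Nat.find_le (fun i h1 h2 => absurd h2 (by omega))
  have hc2 : 1 ≤ c → (c - 1) ∉ Cs := by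
    intro h1 hmem
    have hmin := Nat.find_min hcex (m := c - 1) (by omega)
    push_neg at hmin
    obtain ⟨i, hi1, hi2, hi3⟩ := hmin
    rcases Nat.eq_or_lt_of_le hi1 with heq | hlt
    · exact hi3 (heq ▸ hmem)
    · exact hi3 (hc1 i (by omega) hi2)
  have hd2 : 1 ≤ d → (d - 1) ∉ Ds := by
    intro h1 hmem
    have hmin := Nat.find_min hdex (m := d - 1) (by omega)
    push_neg at hmin
    obtain ⟨i, hi1, hi2, hi3⟩ := hmin
    rcases Nat.eq_or_lt_of_le hi1 with heq | hlt
    · exact hi3 (heq ▸ hmem)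
    · exact hi3 (hd1 i (by omega) hi2)
  set C := Cs.filter (· < c) with hCdef
  set D := Ds.filter (· < d) with hDdef
  have hCc : ∀ x ∈ C, x + 2 ≤ c := by
    intro x hx
    rw [hCdef, Finset.mem_filter] at hx
    obtain ⟨hx1, hx2⟩ := hx
    by_contra hcon
    have hxe : x = c - 1 := by omega
    exact hc2 (by omega) (hxe ▸ hx1)
  have hDd : ∀ x ∈ D, x + 2 ≤ d := by
    intro x hx
    rw [hDdef, Finset.mem_filter] at hx
    obtain ⟨hx1, hx2⟩ := hx
    by_contra hcon
    have hxe : x = d - 1 := by omega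
    exact hd2 (by omega) (hxe ▸ hx1)
  -- main structural equation
  have hstruct : ∀ h : ℕ, N < h →
      B + h • A = C ∪ Finset.Icc c (b + a * h - d) ∪ D.image (fun x => b + a * h - x) := by
    intro h hh
    have hTh := hTge h hh
    rw [hpart h hh]
    ext n
    simp only [Finset.mem_union, Finset.mem_Icc, Finset.mem_image]
    constructor
    · rintro ((hn | hn) | ⟨x, hx, rfl⟩)
      · have hnK := hCsK n hn
        rcases lt_or_ge n c with h1 | h1
        · exact Or.inl (Or.inl (Finset.mem_filter.mpr ⟨hn, h1⟩))
        · exact Or.inl (Or.inr ⟨h1, by omega⟩)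
      · exact Or.inl (Or.inr ⟨by omega, by omega⟩)
      · have hxK := hDsK x hx
        rcases lt_or_ge x d with h1 | h1
        · exact Or.inr ⟨x, Finset.mem_filter.mpr ⟨hx, h1⟩, rfl⟩
        · exact Or.inl (Or.inr ⟨by omega, by omega⟩)
    · rintro ((hn | hn) | ⟨x, hx, rfl⟩)
      · exact Or.inl (Or.inl (Finset.mem_filter.mp hn).1)
      · obtain ⟨hn1, hn2⟩ := hn
        rcases lt_or_ge n K with h1 | h1
        · exact Or.inl (Or.inl (hc1 n hn1 h1))
        rcases le_or_gt n (b + a * h - K) with h2 | h2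
        · exact Or.inl (Or.inr ⟨h1, h2⟩)
        · refine Or.inr ⟨b + a * h - n, hd1 _ (by omega) (by omega), by omega⟩
      · exact Or.inr ⟨x, (Finset.mem_filter.mp hx).1, rfl⟩
  constructor
  · exact ⟨c, d, C, D, hCc, hDd, N, hstruct⟩
  · refine ⟨(c : ℤ) + d - C.card - D.card, N, fun h hh => ?_⟩
    have hTh := hTge h hh
    rw [hstruct h hh]
    have hinj : Set.InjOn (fun x => b + a * h - x) D := by
      intro x hx y hy hxy
      have h1 := hDd x hx
      have h2 := hDd y hy
      simp only at hxy
      omega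
    have hdisj1 : Disjoint C (Finset.Icc c (b + a * h - d)) := by
      rw [Finset.disjoint_left]
      intro x hx hx2
      have := hCc x hx
      rw [Finset.mem_Icc] at hx2
      omega
    have hdisj2 : Disjoint (C ∪ Finset.Icc c (b + a * h - d))
        (D.image (fun x => b + a * h - x)) := by
      rw [Finset.disjoint_left]
      intro y hy hy2
      rw [Finset.mem_image] at hy2
      obtain ⟨x, hx, rfl⟩ := hy2
      have hxd := hDd x hx
      rw [Finset.mem_union, Finset.mem_Icc] at hy
      rcases hy with hy | hy
      · have := hCc _ hy
        omega
      · omega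
    rw [Finset.card_union_of_disjoint hdisj2, Finset.card_union_of_disjoint hdisj1,
      Finset.card_image_of_injOn hinj, Nat.card_Icc]
    have hcard : C.card + (b + a * h - d + 1 - c) + D.card + c + d
        = b + a * h + 1 + C.card + D.card := by omega
    push_cast
    push_cast at hcard
    linarith
end

section
/- Let r and k₁, …, k_r be positive integers, and let f : ℕ^r → ℤ be a function whose multivariate generating function satisfies Σ_{h ∈ ℕ^r} f(h) z^h = z^β P(z) / Π_{i=1}^r (1 − zᵢ)^{kᵢ} as formal power series, for some β ∈ ℕ^r and some polynomial P(z₁, …, z_r) with integer coefficients. Then there exists a polynomial p(z₁, …, z_r) with rational coefficients such that f(h₁, …, h_r) = p(h₁, …, h_r) for all sufficiently large min(h₁, …, h_r). -/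
open Finset

namespace EPRGF

variable {r : ℕ}

/-- A power series supported on the single variable `i`, with coefficients `c`. -/
noncomputable def mono (i : Fin r) (c : ℕ → ℤ) : MvPowerSeries (Fin r) ℤ :=
  fun d => if ∀ j, j ≠ i → d j = 0 then c (d i) else 0

lemma coeff_mono (i : Fin r) (c : ℕ → ℤ) (d : Fin r →₀ ℕ) :
    MvPowerSeries.coeff d (mono i c) =
      if ∀ j, j ≠ i → d j = 0 then c (d i) else 0 := by
  rw [MvPowerSeries.coeff_apply]; rfl

lemma mono_congr {i : Fin r} {c c' : ℕ → ℤ} (h : ∀ n, c n = c' n) :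
    mono i c = mono i c' := by
  funext d
  simp only [mono, h]

lemma one_sub_X_mul_mono (i : Fin r) (c : ℕ → ℤ) :
    (1 - MvPowerSeries.X i) * mono i c
      = mono i (fun n => c n - if n = 0 then 0 else c (n - 1)) := by
  ext d
  have hsub : (∀ j, j ≠ i → ((d - Finsupp.single i 1 : Fin r →₀ ℕ)) j = 0) ↔
      (∀ j, j ≠ i → d j = 0) := by
    apply forall_congr'
    intro j
    rcases eq_or_ne j i with rfl | hj
    · simp
    · simp [Finsupp.tsub_apply, Finsupp.single_apply, Ne.symm hj, hj]
  have hdisub : ((d - Finsupp.single i 1 : Fin r →₀ ℕ)) i = d i - 1 := by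
    simp [Finsupp.tsub_apply]
  have hle : Finsupp.single i 1 ≤ d ↔ d i ≠ 0 := by
    rw [Finsupp.le_def]
    constructor
    · intro hl h0
      have := hl i
      simp [h0] at this
    · intro h0 j
      rcases eq_or_ne j i with rfl | hj
      · simpa [Finsupp.single_apply] using Nat.one_le_iff_ne_zero.2 h0
      · simp [Finsupp.single_apply, Ne.symm hj]
  rw [sub_mul, one_mul, map_sub, MvPowerSeries.X, MvPowerSeries.coeff_monomial_mul,
    coeff_mono, coeff_mono, coeff_mono]
  simp only [hsub, hdisub, one_mul]
  by_cases hd : ∀ j, j ≠ i → d j = 0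
  · simp only [if_pos hd]
    by_cases hdi : d i = 0
    · rw [if_neg (by simp [hle, hdi]), hdi]
      simp
    · rw [if_pos (hle.2 hdi), if_neg hdi]
  · simp [if_neg hd]

lemma mono_delta (i : Fin r) :
    mono i (fun n => if n = 0 then 1 else 0) = 1 := by
  ext d
  rw [coeff_mono, MvPowerSeries.coeff_one]
  by_cases hd : ∀ j, j ≠ i → d j = 0
  · rw [if_pos hd]
    by_cases hdi : d i = 0
    · have hd0 : d = 0 := by
        ext j
        rcases eq_or_ne j i with rfl | hj
        · exact hdi
        · exact hd j hj
      simp [hd0, hdi]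
    · rw [if_neg hdi, if_neg]
      intro h0
      exact hdi (by simp [h0])
  · rw [if_neg hd, if_neg]
    intro h0
    exact hd fun j _ => by simp [h0]

lemma one_sub_X_pow_mul_mono (i : Fin r) :
    ∀ t : ℕ, (1 - MvPowerSeries.X i) ^ (t + 1) *
      mono i (fun n => ((n + t).choose t : ℤ)) = 1
  | 0 =>
    calc (1 - MvPowerSeries.X i) ^ (0 + 1) * mono i (fun n => ((n + 0).choose 0 : ℤ))
        = mono i (fun n => ((n + 0).choose 0 : ℤ)
            - if n = 0 then 0 else (((n - 1) + 0).choose 0 : ℤ)) := by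
          rw [pow_one, one_sub_X_mul_mono]
      _ = mono i (fun n => if n = 0 then 1 else 0) :=
          mono_congr (fun n => by cases n <;> simp)
      _ = 1 := mono_delta i
  | t + 1 => by
    have h1 : (1 - MvPowerSeries.X i) *
        mono i (fun n => ((n + (t + 1)).choose (t + 1) : ℤ))
        = mono i (fun n => ((n + t).choose t : ℤ)) :=
      calc (1 - MvPowerSeries.X i) * mono i (fun n => ((n + (t + 1)).choose (t + 1) : ℤ))
          = mono i (fun n => ((n + (t + 1)).choose (t + 1) : ℤ)
              - if n = 0 then 0 else (((n - 1) + (t + 1)).choose (t + 1) : ℤ)) := by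
            rw [one_sub_X_mul_mono]
        _ = mono i (fun n => ((n + t).choose t : ℤ)) := by
            apply mono_congr
            intro n
            cases n with
            | zero => simp
            | succ n =>
              simp only [Nat.succ_ne_zero, if_false, Nat.succ_sub_one]
              have key : (n + t + 1 + 1).choose (t + 1)
                  = (n + t + 1).choose t + (n + t + 1).choose (t + 1) :=
                Nat.choose_succ_succ (n + t + 1) t
              have e1 : n + 1 + (t + 1) = n + t + 1 + 1 := by ring
              have e2 : n + 1 + t = n + t + 1 := by ring
              rw [e1, e2, key]
              push_cast
              ring
    have h2 : (1 - MvPowerSeries.X i) ^ (t + 1 + 1) *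
        mono i (fun n => ((n + (t + 1)).choose (t + 1) : ℤ))
        = (1 - MvPowerSeries.X i) ^ (t + 1) *
          ((1 - MvPowerSeries.X i) * mono i (fun n => ((n + (t + 1)).choose (t + 1) : ℤ))) := by
      ring
    rw [h2, h1, one_sub_X_pow_mul_mono i t]

lemma coeff_prod_mono (c : Fin r → ℕ → ℤ) (s : Finset (Fin r)) (d : Fin r →₀ ℕ) :
    MvPowerSeries.coeff d (∏ i ∈ s, mono i (c i)) =
      if ∀ j, j ∉ s → d j = 0 then ∏ i ∈ s, c i (d i) else 0 := by
  classical
  induction s using Finset.induction_on generalizing d with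
  | empty =>
    rw [Finset.prod_empty, MvPowerSeries.coeff_one]
    by_cases hd : d = 0
    · simp [hd]
    · rw [if_neg hd, if_neg]
      intro hcon
      exact hd (Finsupp.ext fun j => hcon j (Finset.notMem_empty j))
  | @insert a s ha ih =>
    rw [Finset.prod_insert ha, MvPowerSeries.coeff_mul]
    rw [Finset.sum_eq_single (Finsupp.single a (d a), d.erase a)]
    · rw [coeff_mono, if_pos, Finsupp.single_eq_same, ih]
      · by_cases hcond : ∀ j, j ∉ insert a s → d j = 0
        · rw [if_pos, if_pos hcond]
          · rw [Finset.prod_insert ha]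
            congr 1
            refine Finset.prod_congr rfl fun i hi => ?_
            have hia : i ≠ a := by rintro rfl; exact ha hi
            rw [Finsupp.erase_ne hia]
          · intro j hj
            rcases eq_or_ne j a with rfl | hja
            · exact Finsupp.erase_same
            · rw [Finsupp.erase_ne hja]
              exact hcond j (by simp [hja, hj])
        · rw [if_neg, if_neg hcond, mul_zero]
          push_neg at hcond
          obtain ⟨j, hj, hdj⟩ := hcond
          simp only [Finset.mem_insert, not_or] at hj
          intro hcon
          exact hdj (by rw [← Finsupp.erase_ne hj.1]; exact hcon j hj.2)
      · intro j hja
        rw [Finsupp.single_eq_of_ne hja]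
    · rintro ⟨u, v⟩ hmem hne
      rw [Finset.HasAntidiagonal.mem_antidiagonal] at hmem
      by_contra hnz
      have hu : ∀ j, j ≠ a → u j = 0 := by
        by_contra hcu
        rw [coeff_mono, if_neg hcu, zero_mul] at hnz
        exact hnz rfl
      have hv : ∀ j, j ∉ s → v j = 0 := by
        by_contra hcv
        rw [ih, if_neg hcv, mul_zero] at hnz
        exact hnz rfl
      have hva : v a = 0 := hv a ha
      have hua : u a = d a := by
        have := congrArg (fun w => w a) hmem
        simpa [Finsupp.add_apply, hva] using this
      apply hne
      have h1 : u = Finsupp.single a (d a) := by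
        ext j
        rcases eq_or_ne j a with rfl | hja
        · rw [Finsupp.single_eq_same, hua]
        · rw [Finsupp.single_eq_of_ne hja, hu j hja]
      have h2 : v = d.erase a := by
        ext j
        rcases eq_or_ne j a with rfl | hja
        · rw [Finsupp.erase_same, hva]
        · rw [Finsupp.erase_ne hja]
          have := congrArg (fun w => w j) hmem
          simpa [Finsupp.add_apply, hu j hja] using this
      rw [h1, h2]
    · intro hcon
      exact absurd (Finset.HasAntidiagonal.mem_antidiagonal.2 (Finsupp.single_add_erase a d)) hcon

lemma cast_choose_eq (a b : ℕ) :
    ((a.choose b : ℕ) : ℚ) = (b.factorial : ℚ)⁻¹ * ∏ j ∈ range b, ((a : ℚ) - j) := by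
  rcases lt_or_ge a b with h | h
  · rw [Nat.choose_eq_zero_of_lt h, Finset.prod_eq_zero (Finset.mem_range.2 h) (by simp)]
    simp
  · have h1 : ((a.descFactorial b : ℕ) : ℚ) = ∏ j ∈ range b, ((a : ℚ) - j) := by
      rw [Nat.descFactorial_eq_prod_range, Nat.cast_prod]
      exact Finset.prod_congr rfl fun j hj =>
        Nat.cast_sub (((Finset.mem_range.1 hj).trans_le h).le)
    rw [← h1, Nat.descFactorial_eq_factorial_mul_choose, Nat.cast_mul,
      inv_mul_cancel_left₀ (by exact_mod_cast b.factorial_ne_zero)]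

end EPRGF

/-- **Rational generating functions with denominator `∏ (1 − zᵢ)^{kᵢ}` have eventually
polynomial coefficients.**  Let `k₁, …, k_r` be positive integers and `f : ℕ^r → ℤ`.
If `Σ_{h} f(h) z^h = z^β P(z) / Π_{i} (1 − zᵢ)^{kᵢ}` as formal power series (equivalently,
`F · Π_i (1 − zᵢ)^{kᵢ} = z^β · P` where `F` is the power series with coefficients `f`),
for some `β ∈ ℕ^r` and a polynomial `P` with integer coefficients, then `f` agrees with a
polynomial with rational coefficients for all sufficiently large `min(h₁, …, h_r)`. -/
theorem eventually_polynomial_of_rational_generating_function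
    (r : ℕ) (hr : 0 < r) (k : Fin r → ℕ) (hk : ∀ i, 0 < k i)
    (f : (Fin r → ℕ) → ℤ) (β : Fin r → ℕ) (P : MvPolynomial (Fin r) ℤ)
    (F : MvPowerSeries (Fin r) ℤ)
    (hF : ∀ d : Fin r →₀ ℕ, MvPowerSeries.coeff d F = f d)
    (hEq : F * ∏ i, (1 - MvPowerSeries.X i) ^ k i =
      (∏ i, (MvPowerSeries.X i : MvPowerSeries (Fin r) ℤ) ^ β i) *
        (P : MvPowerSeries (Fin r) ℤ)) :
    ∃ p : MvPolynomial (Fin r) ℚ, ∃ N : ℕ, ∀ h : Fin r → ℕ, (∀ i, N < h i) →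
      (f h : ℚ) = MvPolynomial.eval (fun i => (h i : ℚ)) p := by
  classical
  set G : MvPowerSeries (Fin r) ℤ :=
    ∏ i, EPRGF.mono i (fun n => ((n + (k i - 1)).choose (k i - 1) : ℤ)) with hGdef
  have hDG : (∏ i, (1 - MvPowerSeries.X i) ^ k i) * G = 1 := by
    rw [hGdef, ← Finset.prod_mul_distrib]
    apply Finset.prod_eq_one
    intro i _
    obtain ⟨t, ht⟩ : ∃ t, k i = t + 1 := ⟨k i - 1, (Nat.succ_pred_eq_of_pos (hk i)).symm⟩
    rw [ht]
    simpa using EPRGF.one_sub_X_pow_mul_mono i t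
  set Q : MvPolynomial (Fin r) ℤ := (∏ i, MvPolynomial.X i ^ β i) * P with hQdef
  have hQcoe : ((Q : MvPolynomial (Fin r) ℤ) : MvPowerSeries (Fin r) ℤ)
      = (∏ i, (MvPowerSeries.X i : MvPowerSeries (Fin r) ℤ) ^ β i) *
        (P : MvPowerSeries (Fin r) ℤ) := by
    rw [hQdef, MvPolynomial.coe_mul]
    congr 1
    rw [show ((∏ i, MvPolynomial.X i ^ β i : MvPolynomial (Fin r) ℤ) :
          MvPowerSeries (Fin r) ℤ)
        = MvPolynomial.coeToMvPowerSeries.ringHom (∏ i, MvPolynomial.X i ^ β i) from rfl,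
      map_prod]
    simp [MvPolynomial.coeToMvPowerSeries.ringHom_apply, MvPolynomial.coe_pow,
      MvPolynomial.coe_X]
  have hFG : F = (Q : MvPowerSeries (Fin r) ℤ) * G :=
    calc F = F * ((∏ i, (1 - MvPowerSeries.X i) ^ k i) * G) := by rw [hDG, mul_one]
    _ = (F * ∏ i, (1 - MvPowerSeries.X i) ^ k i) * G := (mul_assoc _ _ _).symm
    _ = _ := by rw [hEq, hQcoe]
  have hQsum : ((Q : MvPolynomial (Fin r) ℤ) : MvPowerSeries (Fin r) ℤ)
      = ∑ m ∈ Q.support, MvPowerSeries.monomial m (MvPolynomial.coeff m Q) := by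
    conv_lhs => rw [Q.as_sum]
    rw [show ((∑ m ∈ Q.support, MvPolynomial.monomial m (MvPolynomial.coeff m Q) :
          MvPolynomial (Fin r) ℤ) : MvPowerSeries (Fin r) ℤ)
        = MvPolynomial.coeToMvPowerSeries.ringHom
            (∑ m ∈ Q.support, MvPolynomial.monomial m (MvPolynomial.coeff m Q)) from rfl,
      map_sum]
    exact Finset.sum_congr rfl fun m _ => MvPolynomial.coe_monomial m _
  have hcoeff : ∀ d : Fin r →₀ ℕ,
      MvPowerSeries.coeff d F
        = ∑ m ∈ Q.support, if m ≤ d then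
            MvPolynomial.coeff m Q * MvPowerSeries.coeff (d - m) G else 0 := by
    intro d
    rw [hFG, hQsum, Finset.sum_mul, map_sum]
    exact Finset.sum_congr rfl fun m _ => by rw [MvPowerSeries.coeff_monomial_mul]
  have hG : ∀ e : Fin r →₀ ℕ, MvPowerSeries.coeff e G
      = ∏ i, (((e i) + (k i - 1)).choose (k i - 1) : ℤ) := by
    intro e
    rw [hGdef, EPRGF.coeff_prod_mono, if_pos (fun j hj => absurd (Finset.mem_univ j) hj)]
  refine ⟨∑ m ∈ Q.support, MvPolynomial.C ((MvPolynomial.coeff m Q : ℤ) : ℚ) *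
      ∏ i, (MvPolynomial.C (((k i - 1).factorial : ℚ)⁻¹) *
        ∏ j ∈ Finset.range (k i - 1),
          (MvPolynomial.X i - MvPolynomial.C ((m i : ℚ)) + MvPolynomial.C (((k i : ℚ) - 1))
            - MvPolynomial.C ((j : ℚ)))), Q.totalDegree, ?_⟩
  intro h hh
  set d : Fin r →₀ ℕ := Finsupp.equivFunOnFinite.symm h with hddef
  have hcoe : ⇑d = h := Finsupp.equivFunOnFinite.apply_symm_apply h
  have hfd : f h = MvPowerSeries.coeff d F := ((hF d).trans (congrArg f hcoe)).symm
  have hmleN : ∀ m ∈ Q.support, ∀ i, m i ≤ Q.totalDegree := by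
    intro m hm i
    rcases Nat.eq_zero_or_pos (m i) with h0 | h0
    · omega
    · have hi : i ∈ m.support := Finsupp.mem_support_iff.2 (Nat.pos_iff_ne_zero.1 h0)
      calc m i ≤ m.sum fun _ e => e := by
            rw [Finsupp.sum]
            exact Finset.single_le_sum (fun j _ => Nat.zero_le _) hi
      _ ≤ Q.totalDegree := MvPolynomial.le_totalDegree hm
  have hmle : ∀ m ∈ Q.support, m ≤ d := by
    intro m hm
    rw [Finsupp.le_def]
    intro i
    have h1 := hmleN m hm i
    have h2 := hh i
    have h3 : d i = h i := congrFun hcoe i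
    omega
  have key : f h = ∑ m ∈ Q.support,
      MvPolynomial.coeff m Q * ∏ i, (((h i - m i) + (k i - 1)).choose (k i - 1) : ℤ) := by
    rw [hfd, hcoeff d]
    refine Finset.sum_congr rfl fun m hm => ?_
    have h3 : ∀ i : Fin r, ((d - m : Fin r →₀ ℕ)) i = h i - m i := fun i => by
      rw [Finsupp.tsub_apply, congrFun hcoe i]
    rw [if_pos (hmle m hm), hG]
    simp only [h3]
  rw [key]
  push_cast
  simp only [map_sum, map_mul, map_prod, map_sub, map_add, MvPolynomial.eval_C,
    MvPolynomial.eval_X]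
  refine Finset.sum_congr rfl fun m hm => ?_
  congr 1
  refine Finset.prod_congr rfl fun i _ => ?_
  rw [EPRGF.cast_choose_eq]
  congr 1
  refine Finset.prod_congr rfl fun j hj => ?_
  have hmi : m i ≤ h i := (hmleN m hm i).trans (hh i).le
  have hki : 1 ≤ k i := hk i
  push_cast [Nat.cast_sub hmi, Nat.cast_sub hki]
  try ring
end
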